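/- arXiv:1410.0417 — 6 statements merged into one kernel-verified Lean document; each statement's English description precedes it below -/
import Mathlib

section
/- For every M = [[α,γ],[β,δ]] ∈ SL₂(O_K) there exist integers m and n such that i(βδ̄−β̄δ) = m·√(−Δ) and i(αγ̄−ᾱγ) = n·√(−Δ); that is, the curvature and co-curvature of every K-Bianchi circle are integer multiples of √(−Δ). -/
/-!
The form `(x, y) ↦ ι x · conj (ι y) - conj (ι x) · ι y` is alternating and `ℤ`-bilinear on `𝓞 K`,
so on a `ℤ`-basis `b₀, b₁` it equals the determinant of the coordinates of `x, y` times its value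
`w` on `(b₀, b₁)`. Since `Δ < 0`, the embedding `ι` is not real, so `ι` and `conj ∘ ι` are the two
embeddings of `K` and `Δ = w²`. As `w` is purely imaginary, `i w` is real with square `-Δ`, i.e.
`i w = ±√(-Δ)`.
-/

open Complex ComplexConjugate NumberField

open Module

theorem NumberField.isTotallyComplex_of_finrank_eq_two_of_discr_neg {K : Type*} [Field K]
    [NumberField K] (hdeg : finrank ℚ K = 2) (hdisc : discr K < 0) : IsTotallyComplex K := by
  have hodd : Odd (InfinitePlace.nrComplexPlaces K) := by
    have h := sign_discr K
    rw [Int.sign_eq_neg_one_of_neg hdisc] at h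
    exact (neg_one_pow_eq_neg_one_iff_odd (by norm_num)).mp h.symm
  have hrank := InfinitePlace.card_add_two_mul_card_eq_rank K
  rw [← nrRealPlaces_eq_zero_iff]
  obtain ⟨k, hk⟩ := hodd
  omega

theorem Algebra.discr_eq_sq_of_finrank_eq_two {F L E : Type*} [Field F] [Field L] [Field E]
    [Algebra F L] [Algebra F E] [FiniteDimensional F L] [IsAlgClosed E] [Algebra.IsSeparable F L]
    (hL : finrank F L = 2) (b : Basis (Fin 2) F L) {σ τ : L →ₐ[F] E} (hστ : σ ≠ τ) :
    algebraMap F E (Algebra.discr F b) = (σ (b 0) * τ (b 1) - τ (b 0) * σ (b 1)) ^ 2 := by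
  have hbij : Function.Bijective ![σ, τ] := by
    rw [Fintype.bijective_iff_injective_and_card, AlgHom.card, hL, Fintype.card_fin]
    refine ⟨fun i j hij => ?_, rfl⟩
    fin_cases i <;> fin_cases j <;> simp_all [eq_comm]
  rw [Algebra.discr_eq_det_embeddingsMatrixReindex_pow_two F E b (Equiv.ofBijective _ hbij),
    Matrix.det_fin_two]
  simp [Algebra.embeddingsMatrixReindex, Algebra.embeddingsMatrix]

theorem Module.Basis.map_mul_sub_map_mul_eq_det_mul {A S : Type*} [CommRing A] [CommRing S]
    (b : Basis (Fin 2) ℤ A) (f g : A →+* S) (x y : A) :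
    f x * g y - g x * f y = b.det ![x, y] * (f (b 0) * g (b 1) - g (b 0) * f (b 1)) := by
  have hx := b.sum_repr x
  have hy := b.sum_repr y
  rw [Fin.sum_univ_two] at hx hy
  rw [Basis.det_apply, Matrix.det_fin_two]
  simp only [Basis.toMatrix_apply, Matrix.cons_val_zero, Matrix.cons_val_one]
  conv_lhs => rw [← hx, ← hy]
  simp only [zsmul_eq_mul, map_add, map_mul, map_intCast]
  push_cast
  ring

theorem Complex.eq_sqrt_or_eq_neg_sqrt {z : ℂ} (hz : conj z = z) {r : ℝ} (h : z ^ 2 = r) :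
    z = √r ∨ z = -√r := by
  obtain ⟨t, rfl⟩ := Complex.conj_eq_iff_real.mp hz
  have ht : t ^ 2 = r := by exact_mod_cast h
  rcases le_or_gt 0 t with h0 | h0
  · left; rw [← ht, Real.sqrt_sq h0]
  · right; rw [← ht, Real.sqrt_sq_eq_abs, abs_of_neg h0]; push_cast; ring

theorem NumberField.exists_int_mul_sqrt_neg_discr {K : Type*} [Field K] [NumberField K]
    (hdeg : finrank ℚ K = 2) (hdisc : discr K < 0) (ι : K →+* ℂ) (x y : 𝓞 K) :
    ∃ m : ℤ, I * (ι (algebraMap (𝓞 K) K x) * conj (ι (algebraMap (𝓞 K) K y))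
        - conj (ι (algebraMap (𝓞 K) K x)) * ι (algebraMap (𝓞 K) K y))
      = m * (√(-(discr K : ℝ)) : ℂ) := by
  have := isTotallyComplex_of_finrank_eq_two_of_discr_neg hdeg hdisc
  have hne : ComplexEmbedding.conjugate ι ≠ ι :=
    ComplexEmbedding.isReal_iff.not.mp (IsTotallyComplex.complexEmbedding_not_isReal ι)
  let φ : 𝓞 K →+* ℂ := ι.comp (algebraMap (𝓞 K) K)
  let b : Basis (Fin 2) ℤ (𝓞 K) := finBasisOfFinrankEq ℤ (𝓞 K) (by rw [RingOfIntegers.rank, hdeg])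
  set w := φ (b 0) * conj (φ (b 1)) - conj (φ (b 0)) * φ (b 1) with hw
  have hdisc_eq : (discr K : ℂ) = w ^ 2 := by
    have h := Algebra.discr_eq_sq_of_finrank_eq_two hdeg
      (b.localizationLocalization ℚ (nonZeroDivisors ℤ) K)
      ((RingHom.equivRatAlgHom (R := K) (S := ℂ)).injective.ne hne.symm)
    rw [Algebra.discr_localizationLocalization, discr_eq_discr] at h
    simp only [algebraMap_int_eq, eq_intCast, map_intCast, RingHom.equivRatAlgHom_apply,
      Basis.localizationLocalization_apply, RingHom.toRatAlgHom_apply,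
      ComplexEmbedding.conjugate_coe_eq] at h
    exact h
  have hreal : conj (I * w) = I * w := by
    simp only [hw, map_mul, map_sub, conj_I, conj_conj]
    ring
  have hsq : (I * w) ^ 2 = ((-(discr K : ℝ) : ℝ) : ℂ) := by
    rw [mul_pow, I_sq, ← hdisc_eq]
    push_cast
    ring
  have hxy : I * (φ x * conj (φ y) - conj (φ x) * φ y) = b.det ![x, y] * (I * w) := by
    have h := b.map_mul_sub_map_mul_eq_det_mul φ ((starRingEnd ℂ).comp φ) x y
    simp only [RingHom.comp_apply] at h
    rw [h, hw]
    ring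
  rcases Complex.eq_sqrt_or_eq_neg_sqrt hreal hsq with h | h
  · exact ⟨b.det ![x, y], hxy.trans (by rw [h])⟩
  · exact ⟨-b.det ![x, y], hxy.trans (by rw [h]; push_cast; ring)⟩

/-- For `M ∈ SL₂(O_K)` (entries embedded in `ℂ` via a fixed embedding `ι`
of the imaginary quadratic field `K`), the curvature `i(βδ̄−β̄δ)` and co-curvature
`i(αγ̄−ᾱγ)` of the Bianchi circle `M(ℝ̂)` are integer multiples of `√(−Δ)`. -/
theorem stmt1 (K : Type) [Field K] [NumberField K]
    (hdeg : Module.finrank ℚ K = 2) (hdisc : NumberField.discr K < 0)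
    (ι : K →+* ℂ)
    (M : Matrix.SpecialLinearGroup (Fin 2) (RingOfIntegers K))
    (α β γ δ : ℂ)
    (hα : α = ι (algebraMap (RingOfIntegers K) K (M.1 0 0)))
    (hγ : γ = ι (algebraMap (RingOfIntegers K) K (M.1 0 1)))
    (hβ : β = ι (algebraMap (RingOfIntegers K) K (M.1 1 0)))
    (hδ : δ = ι (algebraMap (RingOfIntegers K) K (M.1 1 1))) :
    ∃ m n : ℤ,
      Complex.I * (β * conj δ - conj β * δ)
        = (m : ℂ) * (Real.sqrt (-(NumberField.discr K : ℝ)) : ℂ) ∧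
      Complex.I * (α * conj γ - conj α * γ)
        = (n : ℂ) * (Real.sqrt (-(NumberField.discr K : ℝ)) : ℂ) := by
  subst hα hβ hγ hδ
  obtain ⟨m, hm⟩ := exists_int_mul_sqrt_neg_discr hdeg hdisc ι (M.1 1 0) (M.1 1 1)
  obtain ⟨n, hn⟩ := exists_int_mul_sqrt_neg_discr hdeg hdisc ι (M.1 0 0) (M.1 0 1)
  exact ⟨m, n, hm, hn⟩
end

section
/- Let K = ℚ(i), so O_K = ℤ[i]. For M ∈ SL₂(ℤ[i]), the Möbius image M(ℝ̂) equals ℝ̂ = ℝ ∪ {∞} (as subsets of ℂ ∪ {∞}) if and only if either all four entries of M lie in ℤ, or all four entries of M lie in iℤ. -/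
open Complex ComplexConjugate NumberField OnePoint

/-- The finite part of the Möbius image of the extended real line `ℝ̂` under the matrix
`[[α,γ],[β,δ]]`: the set `{(αx+γ)/(βx+δ) : x ∈ ℝ, βx+δ ≠ 0} ∪ {α/β if β ≠ 0}`. -/
def mobiusFin (α β γ δ : ℂ) : Set ℂ :=
  {z | (∃ x : ℝ, β * (x : ℂ) + δ ≠ 0 ∧ z = (α * x + γ) / (β * x + δ)) ∨ (β ≠ 0 ∧ z = α / β)}

/-- The Möbius image of `ℝ̂ = ℝ ∪ {∞}` in `ℂ ∪ {∞}` under the matrix `[[α,γ],[β,δ]]`;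
`∞` belongs to it iff `β = 0` or `δ/β ∈ ℝ`. -/
def mobius (α β γ δ : ℂ) : Set (OnePoint ℂ) :=
  {w | (∃ z ∈ mobiusFin α β γ δ, w = (z : OnePoint ℂ)) ∨
       ((β = 0 ∨ ∃ x : ℝ, δ = β * (x : ℂ)) ∧ w = ∞)}

/-- The extended real line `ℝ̂ = ℝ ∪ {∞}` as a subset of `ℂ ∪ {∞}`. -/
def rhat : Set (OnePoint ℂ) :=
  {w | (∃ x : ℝ, w = ((x : ℂ) : OnePoint ℂ)) ∨ w = ∞}

/-- The embedding of the ring of integers of `K` into `ℂ` induced by `ι : K →+* ℂ`. -/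
noncomputable def emb (K : Type) [Field K] [NumberField K] (ι : K →+* ℂ)
    (x : RingOfIntegers K) : ℂ := ι (algebraMap (RingOfIntegers K) K x)

/-- The `K`-Bianchi circle attached to `M ∈ SL₂(O_K)`: the Möbius image `M(ℝ̂) ⊆ ℂ ∪ {∞}`. -/
noncomputable def bianchiCircle (K : Type) [Field K] [NumberField K] (ι : K →+* ℂ)
    (M : Matrix.SpecialLinearGroup (Fin 2) (RingOfIntegers K)) : Set (OnePoint ℂ) :=
  mobius (emb K ι (M.1 0 0)) (emb K ι (M.1 1 0)) (emb K ι (M.1 0 1)) (emb K ι (M.1 1 1))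

/-! If `M(ℝ̂) = ℝ̂`, then `(αx+γ)·conj(βx+δ)` is real for all but at most one real `x`. Its
imaginary part is a real quadratic in `x`, so `αβ̄`, `γδ̄` and `αδ̄ + γβ̄` are real; together with
`∞ ∈ M(ℝ̂)` this makes all four entries real multiples of a single `λ ≠ 0`, and `det M = 1` then
forces `λ²` to be real, i.e. `λ ∈ ℝ ∪ iℝ`. Conversely a real matrix, or `i` times one, preserves
`ℝ̂`. Finally `[K : ℚ] = 2` and `i ∈ ι(K)` give `ι(K) = ℚ(i)`, and an algebraic integer of `ℚ`
(resp. `iℚ`) lies in `ℤ` (resp. `iℤ`). -/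

lemma mobiusFin_mul_left {l : ℂ} (hl : l ≠ 0) (α β γ δ : ℂ) :
    mobiusFin (l * α) (l * β) (l * γ) (l * δ) = mobiusFin α β γ δ := by
  have hden (x : ℂ) : l * β * x + l * δ = l * (β * x + δ) := by ring
  have hnum (x : ℂ) : l * α * x + l * γ = l * (α * x + γ) := by ring
  ext z
  simp only [mobiusFin, Set.mem_ofPred_eq, hden, hnum, mul_div_mul_left _ _ hl, ne_eq,
    mul_eq_zero, hl, false_or]

lemma mobius_mul_left {l : ℂ} (hl : l ≠ 0) (α β γ δ : ℂ) :
    mobius (l * α) (l * β) (l * γ) (l * δ) = mobius α β γ δ := by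
  ext w
  simp only [mobius, Set.mem_ofPred_eq, mobiusFin_mul_left hl, mul_eq_zero, hl, false_or,
    mul_assoc, mul_right_inj' hl]

lemma mobiusFin_ofReal {a b c d : ℝ} (hdet : a * d - c * b ≠ 0) :
    mobiusFin a b c d = Set.range ((↑) : ℝ → ℂ) := by
  ext z
  simp only [mobiusFin, Set.mem_ofPred_eq, Set.mem_range]
  constructor
  · rintro (⟨x, -, rfl⟩ | ⟨-, rfl⟩)
    · exact ⟨(a * x + c) / (b * x + d), by push_cast; rfl⟩
    · exact ⟨a / b, by push_cast; rfl⟩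
  rintro ⟨y, rfl⟩
  by_cases hpole : a - b * y = 0
  · have hb : b ≠ 0 := by rintro rfl; apply hdet; simp_all
    refine Or.inr ⟨by exact_mod_cast hb, ?_⟩
    rw [← Complex.ofReal_div, ← eq_div_of_mul_eq hb (by linarith : y * b = a)]
  obtain ⟨x, hx⟩ : ∃ x, x * (a - b * y) = d * y - c := ⟨_, div_mul_cancel₀ _ hpole⟩
  have hden : (b * x + d) * (a - b * y) = a * d - c * b := by linear_combination b * hx
  have hden_ne : b * x + d ≠ 0 := by rintro h; rw [h, zero_mul] at hden; exact hdet hden.symm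
  refine Or.inl ⟨x, by exact_mod_cast hden_ne, ?_⟩
  exact_mod_cast (eq_div_iff hden_ne).mpr (by linear_combination -hx)

lemma mobius_ofReal {a b c d : ℝ} (hdet : a * d - c * b ≠ 0) : mobius a b c d = rhat := by
  ext w
  simp only [mobius, mobiusFin_ofReal hdet, rhat, Set.mem_ofPred_eq, Set.mem_range]
  constructor
  · rintro (⟨_, ⟨x, rfl⟩, rfl⟩ | ⟨-, rfl⟩)
    · exact Or.inl ⟨x, rfl⟩
    · exact Or.inr rfl
  rintro (⟨x, rfl⟩ | rfl)
  · exact Or.inl ⟨x, ⟨x, rfl⟩, rfl⟩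
  refine Or.inr ⟨?_, rfl⟩
  by_cases hb : b = 0
  · exact Or.inl (by exact_mod_cast hb)
  · exact Or.inr ⟨d / b, by
      have hb' : (b : ℂ) ≠ 0 := by exact_mod_cast hb
      push_cast; field_simp⟩

lemma exists_ofReal_mul_of_im_mul_conj_eq_zero {z w : ℂ} (hw : w ≠ 0)
    (h : (z * conj w).im = 0) : ∃ r : ℝ, z = r * w := by
  have him : (z / w).im = 0 := by
    simp only [Complex.mul_im, Complex.conj_re, Complex.conj_im] at h
    rw [Complex.div_im, div_sub_div_same]
    exact div_eq_zero_iff.mpr (Or.inl (by linarith))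
  have hreal : z / w = (z / w).re := Complex.ext (by simp) (by simp [him])
  exact ⟨(z / w).re, by rw [← hreal, div_mul_cancel₀ z hw]⟩

lemma re_mul_im_eq_zero_of_sq_mul_ofReal_eq_one {l : ℂ} {r : ℝ} (h : l ^ 2 * r = 1) :
    l.re * l.im = 0 := by
  have hr : r ≠ 0 := by rintro rfl; simp at h
  have him := congrArg Complex.im h
  simp only [Complex.mul_im, Complex.ofReal_re, Complex.ofReal_im, pow_two, Complex.one_im,
    mul_zero, Complex.mul_re] at him
  have : (2 * (l.re * l.im)) * r = 0 := by linarith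
  simpa [hr] using this

section MobiusEqRhat

variable {α β γ δ : ℂ}

lemma im_mul_conj_eq_zero_of_mobius_eq_rhat (h : mobius α β γ δ = rhat) {x : ℝ}
    (hx : β * x + δ ≠ 0) : ((α * x + γ) * conj (β * x + δ)).im = 0 := by
  have hmem : (((α * x + γ) / (β * x + δ) : ℂ) : OnePoint ℂ) ∈ rhat :=
    h ▸ Or.inl ⟨_, Or.inl ⟨x, hx, rfl⟩, rfl⟩
  obtain ⟨y, hy⟩ | hy := hmem
  · rw [(div_eq_iff hx).mp (OnePoint.coe_eq_coe.mp hy), mul_assoc, Complex.mul_conj]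
    simp
  · exact absurd hy (OnePoint.coe_ne_infty _)

lemma infty_mem_of_mobius_eq_rhat (h : mobius α β γ δ = rhat) :
    β = 0 ∨ ∃ s : ℝ, δ = β * s := by
  obtain ⟨z, -, hz⟩ | ⟨hβδ, -⟩ := (h ▸ Or.inr rfl : (∞ : OnePoint ℂ) ∈ mobius α β γ δ)
  · exact absurd hz.symm (OnePoint.coe_ne_infty z)
  · exact hβδ

lemma setOf_mul_add_eq_zero_finite (h : β ≠ 0 ∨ δ ≠ 0) : {x : ℝ | β * x + δ = 0}.Finite := by
  refine Set.Subsingleton.finite fun x (hx : β * x + δ = 0) y (hy : β * y + δ = 0) => ?_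
  have hxy : β * ((x : ℂ) - y) = 0 := by linear_combination hx - hy
  rcases mul_eq_zero.mp hxy with hβ | hxy
  · simp_all
  · exact_mod_cast sub_eq_zero.mp hxy

lemma eq_zero_of_quadratic_eq_zero_off_finite {a b c : ℝ} {s : Set ℝ} (hs : s.Finite)
    (h : ∀ x ∉ s, a * x ^ 2 + b * x + c = 0) : a = 0 ∧ b = 0 ∧ c = 0 := by
  have hq : (fun x : ℝ => a * x ^ 2 + b * x + c) = fun _ => 0 :=
    Continuous.ext_on (hs.countable.dense_compl ℝ) (by fun_prop) continuous_const h
  have h0 := congrFun hq 0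
  have h1 := congrFun hq 1
  have h2 := congrFun hq (-1)
  norm_num at h0 h1 h2
  exact ⟨by linarith, by linarith, by linarith⟩

lemma im_coeffs_eq_zero_of_mobius_eq_rhat (hdet : α * δ - γ * β = 1)
    (h : mobius α β γ δ = rhat) :
    (α * conj β).im = 0 ∧ (α * conj δ + γ * conj β).im = 0 ∧ (γ * conj δ).im = 0 := by
  have hβδ : β ≠ 0 ∨ δ ≠ 0 := by
    by_contra! h0
    simp [h0.1, h0.2] at hdet
  refine eq_zero_of_quadratic_eq_zero_off_finite (setOf_mul_add_eq_zero_finite hβδ)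
    fun x hx => ?_
  have hexp : (α * x + γ) * conj (β * x + δ)
      = α * conj β * (x : ℂ) ^ 2 + (α * conj δ + γ * conj β) * x + γ * conj δ := by
    simp only [map_add, map_mul, Complex.conj_ofReal]
    ring
  have := im_mul_conj_eq_zero_of_mobius_eq_rhat h hx
  rw [hexp] at this
  simpa [Complex.add_im, Complex.mul_im, pow_two] using this

lemma exists_common_factor_of_im_coeffs_eq_zero (hdet : α * δ - γ * β = 1)
    (hαβ : (α * conj β).im = 0) (hmid : (α * conj δ + γ * conj β).im = 0)
    (hγδ : (γ * conj δ).im = 0) (hinf : β = 0 ∨ ∃ s : ℝ, δ = β * s) :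
    ∃ l ≠ 0, ∃ a b c d : ℝ, α = a * l ∧ β = b * l ∧ γ = c * l ∧ δ = d * l := by
  rcases hinf with hβ | ⟨s, hδ⟩
  · subst hβ
    have hδ : δ ≠ 0 := by rintro rfl; simp at hdet
    obtain ⟨a, ha⟩ := exists_ofReal_mul_of_im_mul_conj_eq_zero hδ (by simpa using hmid)
    obtain ⟨c, hc⟩ := exists_ofReal_mul_of_im_mul_conj_eq_zero hδ hγδ
    exact ⟨δ, hδ, a, 0, c, 1, ha, by simp, hc, by simp⟩
  have hβ : β ≠ 0 := by rintro rfl; simp [hδ] at hdet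
  obtain ⟨a, ha⟩ := exists_ofReal_mul_of_im_mul_conj_eq_zero hβ hαβ
  -- `α * conj δ = a * s * |β|²` is real, so the middle coefficient forces `γ * conj β` real
  have hγβ : (γ * conj β).im = 0 := by
    have hαδ : α * conj δ = ((a * s * Complex.normSq β : ℝ) : ℂ) := by
      push_cast
      rw [ha, hδ, map_mul, Complex.conj_ofReal, ← Complex.mul_conj]
      ring
    simpa [hαδ] using hmid
  obtain ⟨c, hc⟩ := exists_ofReal_mul_of_im_mul_conj_eq_zero hβ hγβ
  exact ⟨β, hβ, a, 1, c, s, ha, by simp, hc, by rw [hδ, mul_comm]⟩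

end MobiusEqRhat

theorem mobius_eq_rhat_iff {α β γ δ : ℂ} (hdet : α * δ - γ * β = 1) :
    mobius α β γ δ = rhat ↔
      (α.im = 0 ∧ γ.im = 0 ∧ β.im = 0 ∧ δ.im = 0) ∨
      (α.re = 0 ∧ γ.re = 0 ∧ β.re = 0 ∧ δ.re = 0) := by
  constructor
  · intro h
    obtain ⟨hαβ, hmid, hγδ⟩ := im_coeffs_eq_zero_of_mobius_eq_rhat hdet h
    obtain ⟨l, -, a, b, c, d, rfl, rfl, rfl, rfl⟩ := exists_common_factor_of_im_coeffs_eq_zero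
      hdet hαβ hmid hγδ (infty_mem_of_mobius_eq_rhat h)
    have hl : l ^ 2 * (a * d - c * b : ℝ) = 1 := by push_cast; linear_combination hdet
    rcases mul_eq_zero.mp (re_mul_im_eq_zero_of_sq_mul_ofReal_eq_one hl) with hre | him
    · right; simp [hre]
    · left; simp [him]
  · rintro (⟨ha, hc, hb, hd⟩ | ⟨ha, hc, hb, hd⟩)
    · have hreal {z : ℂ} (hz : z.im = 0) : z = z.re := Complex.ext (by simp) (by simp [hz])
      rw [hreal ha, hreal hb, hreal hc, hreal hd] at hdet ⊢
      refine mobius_ofReal fun h0 => ?_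
      have : ((α.re * δ.re - γ.re * β.re : ℝ) : ℂ) = 1 := by push_cast; exact hdet
      simp [h0] at this
    · have himag {z : ℂ} (hz : z.re = 0) : z = Complex.I * z.im :=
        Complex.ext (by simp [hz]) (by simp)
      rw [himag ha, himag hb, himag hc, himag hd] at hdet ⊢
      rw [mobius_mul_left Complex.I_ne_zero]
      refine mobius_ofReal fun h0 => ?_
      have : ((α.im * δ.im - γ.im * β.im : ℝ) : ℂ) = -1 := by
        push_cast; linear_combination -hdet + (α.im * δ.im - γ.im * β.im : ℂ) * Complex.I_sq
      simp [h0] at this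

lemma exists_int_eq_of_isIntegral_of_ratCast {q : ℚ} (h : IsIntegral ℤ (q : ℂ)) :
    ∃ n : ℤ, (q : ℂ) = n := by
  have hq : IsIntegral ℤ q := by
    rwa [← isIntegral_algebraMap_iff (B := ℂ) (algebraMap ℚ ℂ).injective, eq_ratCast]
  obtain ⟨n, rfl⟩ := IsIntegrallyClosed.isIntegral_iff.mp hq
  exact ⟨n, by simp⟩

lemma isIntegral_I : IsIntegral ℤ Complex.I :=
  ⟨Polynomial.X ^ 2 + 1, Polynomial.monic_X_pow_add (by simp), by simp⟩

lemma exists_int_eq_of_im_eq_zero {z : ℂ} (hz : IsIntegral ℤ z) {a b : ℚ}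
    (hab : z = a + b * Complex.I) (him : z.im = 0) : ∃ n : ℤ, z = n := by
  have hb : (b : ℂ) = 0 := by simpa [hab] using him
  rw [hab, hb, zero_mul, add_zero] at hz ⊢
  exact exists_int_eq_of_isIntegral_of_ratCast hz

lemma exists_int_eq_I_mul_of_re_eq_zero {z : ℂ} (hz : IsIntegral ℤ z) {a b : ℚ}
    (hab : z = a + b * Complex.I) (hre : z.re = 0) : ∃ n : ℤ, z = Complex.I * n := by
  have hIz : -Complex.I * z = b + (-a : ℚ) * Complex.I := by
    rw [hab]; push_cast; linear_combination (-(b : ℂ)) * Complex.I_sq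
  obtain ⟨n, hn⟩ := exists_int_eq_of_im_eq_zero (isIntegral_I.neg.mul hz) hIz (by simp [hre])
  refine ⟨n, ?_⟩
  linear_combination Complex.I * hn + z * Complex.I_sq

section Field

variable {K : Type} [Field K] [NumberField K] {ι : K →+* ℂ}

lemma exists_rat_add_rat_mul_I (hdeg : Module.finrank ℚ K = 2) {i : K}
    (hi : ι i = Complex.I) (z : K) : ∃ a b : ℚ, ι z = a + b * Complex.I := by
  have hli : LinearIndependent ℚ ![1, i] := by
    refine LinearIndependent.pair_iff.mpr fun s t hst => ?_
    have h := congrArg ι hst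
    simp only [Rat.smul_def, map_add, map_mul, map_ratCast, mul_one, hi, map_zero,
      Complex.ext_iff] at h
    simpa using h
  have hspan : Submodule.span ℚ {1, i} = ⊤ := by
    rw [← Matrix.range_cons_cons_empty]
    exact hli.span_eq_top_of_card_eq_finrank (by simp [hdeg])
  obtain ⟨a, b, hab⟩ := Submodule.mem_span_pair.mp (hspan ▸ Submodule.mem_top (x := z))
  refine ⟨a, b, ?_⟩
  rw [← hab]
  simp [Rat.smul_def, hi]

lemma isIntegral_emb (x : 𝓞 K) : IsIntegral ℤ (emb K ι x) :=
  (RingOfIntegers.isIntegral_coe x).map ι.toIntAlgHom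

lemma emb_im_eq_zero_iff (hdeg : Module.finrank ℚ K = 2) (hKi : ∃ i : K, ι i = Complex.I)
    (x : 𝓞 K) :
    (emb K ι x).im = 0 ↔ ∃ n : ℤ, emb K ι x = n := by
  obtain ⟨i, hi⟩ := hKi
  obtain ⟨a, b, hab⟩ := exists_rat_add_rat_mul_I hdeg hi x
  exact ⟨exists_int_eq_of_im_eq_zero (isIntegral_emb x) hab, by rintro ⟨n, hn⟩; simp [hn]⟩

lemma emb_re_eq_zero_iff (hdeg : Module.finrank ℚ K = 2) (hKi : ∃ i : K, ι i = Complex.I)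
    (x : 𝓞 K) :
    (emb K ι x).re = 0 ↔ ∃ n : ℤ, emb K ι x = Complex.I * n := by
  obtain ⟨i, hi⟩ := hKi
  obtain ⟨a, b, hab⟩ := exists_rat_add_rat_mul_I hdeg hi x
  exact ⟨exists_int_eq_I_mul_of_re_eq_zero (isIntegral_emb x) hab, by rintro ⟨n, hn⟩; simp [hn]⟩

end Field

theorem stmt3_general (K : Type) [Field K] [NumberField K]
    (hdeg : Module.finrank ℚ K = 2)
    (ι : K →+* ℂ) (hKi : ∃ x : K, ι x = Complex.I)
    (M : Matrix.SpecialLinearGroup (Fin 2) (RingOfIntegers K)) :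
    bianchiCircle K ι M = rhat ↔
      ((∀ i j : Fin 2, ∃ n : ℤ, emb K ι (M.1 i j) = (n : ℂ)) ∨
       (∀ i j : Fin 2, ∃ n : ℤ, emb K ι (M.1 i j) = Complex.I * (n : ℂ))) := by
  have hdet :
      emb K ι (M.1 0 0) * emb K ι (M.1 1 1) - emb K ι (M.1 0 1) * emb K ι (M.1 1 0) = 1 := by
    have h := M.2
    rw [Matrix.det_fin_two] at h
    simpa [emb] using congrArg (fun x => ι (algebraMap (𝓞 K) K x)) h
  simp only [Fin.forall_fin_two, and_assoc, ← emb_im_eq_zero_iff hdeg hKi,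
    ← emb_re_eq_zero_iff hdeg hKi]
  exact mobius_eq_rhat_iff hdet

/-- If `K = ℚ(i)` (i.e. `i` lies in the image of the quadratic field `K`
in `ℂ`, so `O_K = ℤ[i]`), then for `M ∈ SL₂(O_K)` the Möbius image `M(ℝ̂)` equals `ℝ̂`
iff all four entries of `M` lie in `ℤ`, or all four entries of `M` lie in `iℤ`. -/
theorem stmt3 (K : Type) [Field K] [NumberField K]
    (hdeg : Module.finrank ℚ K = 2) (hdisc : NumberField.discr K < 0)
    (ι : K →+* ℂ) (hKi : ∃ x : K, ι x = Complex.I)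
    (M : Matrix.SpecialLinearGroup (Fin 2) (RingOfIntegers K)) :
    bianchiCircle K ι M = rhat ↔
      ((∀ i j : Fin 2, ∃ n : ℤ, emb K ι (M.1 i j) = (n : ℂ)) ∨
       (∀ i j : Fin 2, ∃ n : ℤ, emb K ι (M.1 i j) = Complex.I * (n : ℂ))) :=
  stmt3_general K hdeg ι hKi M
end

section
/- Suppose Δ ≠ −3 (i.e. K ≠ ℚ(√−3)). Then any two distinct K-Bianchi circles have at most one common point in ℂ ∪ {∞}; that is, distinct K-Bianchi circles are either disjoint or tangent. -/
open Complex ComplexConjugate NumberField OnePoint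

/-! In homogeneous coordinates `v ∈ ℂ²`, the circle `A(ℝ̂)` with `det A = 1` is the zero set
of the indefinite Hermitian form `F_A(v) = conj q * p - q * conj p`, `(p, q) = adj A • v`.
If two such circles pass through distinct points `x, y`, each form is determined by
`c = F(x, y)`, and `det A = 1` forces `|c| = |x ∧ y|`. So either `c' = ±c` and the circles
coincide, or the mixed discriminant `P(A, B)` of the two forms satisfies `|P| < 2`.

For `A, B ∈ SL₂(O_K)` the coefficients of the forms are integral: writing
`O_K = ℤ b₀ + ℤ b₁`, every `Im (conj p * q)` with `p, q ∈ O_K` lies in `s ℤ`, where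
`s = Im (conj b₀ * b₁)` and `4 s² = -Δ`. A parity argument then gives `P ≡ 2 mod Δ`.
Since `|Δ| > 2` (Hermite–Minkowski), `Δ ≠ -3` forces `|Δ| ≥ 4`, and then `|P| < 2` is
impossible.
-/

namespace BianchiCircles

def homCoords (w : OnePoint ℂ) : ℂ × ℂ := w.elim (1, 0) fun z => (z, 1)

@[simp] lemma homCoords_infty : homCoords ∞ = (1, 0) := rfl

@[simp] lemma homCoords_coe (z : ℂ) : homCoords z = (z, 1) := rfl

def cross (x y : ℂ × ℂ) : ℂ := x.1 * y.2 - x.2 * y.1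

lemma cross_homCoords_ne_zero {w₁ w₂ : OnePoint ℂ} (hw : w₁ ≠ w₂) :
    cross (homCoords w₁) (homCoords w₂) ≠ 0 := by
  induction w₁ using OnePoint.rec <;> induction w₂ using OnePoint.rec
  · exact absurd rfl hw
  all_goals simp only [cross, homCoords_infty, homCoords_coe]
  · norm_num
  · norm_num
  · rw [mul_one, one_mul, sub_ne_zero]
    exact fun h => hw (congrArg _ h)

def mobiusCircle (A : Matrix (Fin 2) (Fin 2) ℂ) : Set (OnePoint ℂ) :=
  mobius (A 0 0) (A 1 0) (A 0 1) (A 1 1)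

/-- With `(p, q) = adj A • x`, a point `x` lies on `A(ℝ̂)` iff `p / q ∈ ℝ̂`, i.e. iff
`circleForm A x x = conj q * p - q * conj p` vanishes (`mem_mobiusCircle_iff`). -/
def circleForm (A : Matrix (Fin 2) (Fin 2) ℂ) (x y : ℂ × ℂ) : ℂ :=
  conj (A 0 0 * y.2 - A 1 0 * y.1) * (A 1 1 * x.1 - A 0 1 * x.2) -
    (A 0 0 * x.2 - A 1 0 * x.1) * conj (A 1 1 * y.1 - A 0 1 * y.2)

/-- The polarization of `A ↦ 2 |det A|²` (`circlePairing_self`) in the coefficients of the forms;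
for two circles meeting in two points it is `2 cos θ`, `θ` their angle of intersection. -/
def circlePairing (A B : Matrix (Fin 2) (Fin 2) ℂ) : ℂ :=
  (conj (A 1 0) * A 1 1 - A 1 0 * conj (A 1 1)) *
      (conj (B 0 0) * B 0 1 - B 0 0 * conj (B 0 1)) +
    (conj (B 1 0) * B 1 1 - B 1 0 * conj (B 1 1)) *
      (conj (A 0 0) * A 0 1 - A 0 0 * conj (A 0 1)) +
    (conj (A 0 0) * A 1 1 - A 1 0 * conj (A 0 1)) *
      conj (conj (B 0 0) * B 1 1 - B 1 0 * conj (B 0 1)) +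
    conj (conj (A 0 0) * A 1 1 - A 1 0 * conj (A 0 1)) *
      (conj (B 0 0) * B 1 1 - B 1 0 * conj (B 0 1))

section Identities

variable (A B : Matrix (Fin 2) (Fin 2) ℂ) (x y u : ℂ × ℂ)

lemma circleForm_swap : circleForm A y x = -conj (circleForm A x y) := by
  simp only [circleForm, map_sub, map_mul, Complex.conj_conj]
  ring

lemma circleForm_gram :
    circleForm A x x * circleForm A y y - circleForm A x y * circleForm A y x =
      A.det * conj A.det * (cross x y * conj (cross x y)) := by
  simp only [circleForm, cross, Matrix.det_fin_two, map_sub, map_mul]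
  ring

lemma circleForm_mixed_gram :
    circleForm A x x * circleForm B y y + circleForm B x x * circleForm A y y -
      circleForm A x y * circleForm B y x - circleForm B x y * circleForm A y x =
      circlePairing A B * (cross x y * conj (cross x y)) := by
  simp only [circleForm, circlePairing, cross, map_sub, map_mul, Complex.conj_conj]
  ring

lemma circleForm_expand :
    cross x y * conj (cross x y) * circleForm A u u =
      cross u y * conj (cross u y) * circleForm A x x +
      cross u y * conj (cross x u) * circleForm A x y +
      cross x u * conj (cross u y) * circleForm A y x +
      cross x u * conj (cross x u) * circleForm A y y := by
  simp only [circleForm, cross, map_sub, map_mul]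
  ring

lemma circlePairing_self : circlePairing A A = 2 * (A.det * conj A.det) := by
  simp only [circlePairing, Matrix.det_fin_two, map_sub, map_mul, Complex.conj_conj]
  ring

end Identities

lemma conj_mul_sub_mul_conj_eq_zero_iff {p q : ℂ} (hq : q ≠ 0) :
    conj q * p - q * conj p = 0 ↔ ∃ x : ℝ, p = x * q := by
  have hq' : conj q ≠ 0 := (map_ne_zero _).2 hq
  constructor
  · intro h
    obtain ⟨x, hx⟩ := Complex.conj_eq_iff_real.1 (show conj (p / q) = p / q by
      rw [map_div₀, div_eq_div_iff hq' hq]; linear_combination -h)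
    exact ⟨x, by rw [← hx, div_mul_cancel₀ _ hq]⟩
  · rintro ⟨x, rfl⟩
    rw [map_mul, Complex.conj_ofReal]
    ring

lemma im_mul_conj (p q : ℂ) : (p * conj q).im = -(conj p * q).im := by
  simp only [Complex.mul_im, Complex.conj_re, Complex.conj_im]
  ring

lemma im_conj_mul_intCast_comb (u₀ u₁ : ℂ) (r₀ r₁ t₀ t₁ : ℤ) :
    (conj (r₀ * u₀ + r₁ * u₁) * (t₀ * u₀ + t₁ * u₁)).im =
      (r₀ * t₁ - r₁ * t₀ : ℤ) * (conj u₀ * u₁).im := by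
  simp only [map_add, map_mul, map_intCast, Complex.add_im, Complex.mul_im, Complex.add_re,
    Complex.mul_re, Complex.intCast_re, Complex.intCast_im, Complex.conj_re, Complex.conj_im]
  push_cast
  ring

lemma coe_mem_mobius_iff {α β γ δ : ℂ} (hdet : α * δ - γ * β = 1) (z : ℂ) :
    (z : OnePoint ℂ) ∈ mobius α β γ δ ↔
      conj (α - β * z) * (δ * z - γ) - (α - β * z) * conj (δ * z - γ) = 0 := by
  have hmem : (z : OnePoint ℂ) ∈ mobius α β γ δ ↔ z ∈ mobiusFin α β γ δ := by
    simp [mobius]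
  rw [hmem]
  set p := δ * z - γ
  set q := α - β * z
  have hβ : β * p + δ * q = 1 := by linear_combination hdet
  have hα : α * p + γ * q = z := by linear_combination z * hdet
  constructor
  · rintro (⟨x, hden, hz⟩ | ⟨hβ0, hz⟩)
    · rw [eq_div_iff hden] at hz
      have hq : q * (β * x + δ) = 1 := by linear_combination hdet - β * hz
      have hp : p = x * q := by linear_combination (-p) * hq + q * (δ * hz + x * hdet)
      exact (conj_mul_sub_mul_conj_eq_zero_iff (left_ne_zero_of_mul_eq_one hq)).2 ⟨x, hp⟩
    · have hq : q = 0 := by simp only [q, hz]; field_simp; ring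
      simp [hq]
  · intro h
    by_cases hq : q = 0
    · have hβ0 : β ≠ 0 := by
        rintro rfl
        simp [hq] at hβ
      refine Or.inr ⟨hβ0, ?_⟩
      rw [eq_div_iff hβ0]
      linear_combination -hq
    · obtain ⟨x, hx⟩ := (conj_mul_sub_mul_conj_eq_zero_iff hq).1 h
      have hden : q * (β * x + δ) = 1 := by linear_combination hβ - β * hx
      refine Or.inl ⟨x, right_ne_zero_of_mul_eq_one hden, ?_⟩
      rw [eq_div_iff (right_ne_zero_of_mul_eq_one hden)]
      linear_combination -(β * x + δ) * hα + (β * x + δ) * α * hx + (α * x + γ) * hden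

lemma infty_mem_mobius_iff {α β γ δ : ℂ} :
    ∞ ∈ mobius α β γ δ ↔ conj β * δ - β * conj δ = 0 := by
  have hmem : ∞ ∈ mobius α β γ δ ↔ β = 0 ∨ ∃ x : ℝ, δ = β * x := by
    simp [mobius]
  rw [hmem]
  by_cases hβ : β = 0
  · simp [hβ]
  · rw [conj_mul_sub_mul_conj_eq_zero_iff hβ]
    simp only [hβ, false_or, mul_comm β]

lemma mem_mobiusCircle_iff {A : Matrix (Fin 2) (Fin 2) ℂ} (hA : A.det = 1) (w : OnePoint ℂ) :
    w ∈ mobiusCircle A ↔ circleForm A (homCoords w) (homCoords w) = 0 := by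
  rw [Matrix.det_fin_two] at hA
  induction w using OnePoint.rec with
  | infty =>
    rw [mobiusCircle, infty_mem_mobius_iff]
    simp only [circleForm, homCoords_infty, mul_zero, mul_one, zero_sub, sub_zero, map_neg]
    constructor <;> intro h <;> linear_combination -h
  | coe z =>
    rw [mobiusCircle, coe_mem_mobius_iff (by linear_combination hA)]
    simp only [circleForm, homCoords_coe, mul_one]

section TwoCommonPoints

variable {A B : Matrix (Fin 2) (Fin 2) ℂ} {x y : ℂ × ℂ}

lemma normSq_circleForm_eq (hA : A.det = 1) (hx : circleForm A x x = 0)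
    (hy : circleForm A y y = 0) : normSq (circleForm A x y) = normSq (cross x y) := by
  have h := circleForm_gram A x y
  rw [hx, hy, circleForm_swap A x y, hA, map_one] at h
  apply Complex.ofReal_injective
  rw [← Complex.mul_conj, ← Complex.mul_conj]
  linear_combination h

lemma circleForm_self_eq (hx : circleForm A x x = 0) (hy : circleForm A y y = 0) (u : ℂ × ℂ) :
    cross x y * conj (cross x y) * circleForm A u u =
      cross u y * conj (cross x u) * circleForm A x y -
        cross x u * conj (cross u y) * conj (circleForm A x y) := by
  rw [circleForm_expand, hx, hy, circleForm_swap A x y]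
  ring

lemma mobiusCircle_eq_of_circleForm_eq_or_eq_neg (hA : A.det = 1) (hB : B.det = 1)
    (hxA : circleForm A x x = 0) (hyA : circleForm A y y = 0)
    (hxB : circleForm B x x = 0) (hyB : circleForm B y y = 0) (hd : cross x y ≠ 0)
    (h : circleForm B x y = circleForm A x y ∨ circleForm B x y = -circleForm A x y) :
    mobiusCircle A = mobiusCircle B := by
  have hdd : cross x y * conj (cross x y) ≠ 0 := mul_ne_zero hd ((map_ne_zero _).2 hd)
  ext w
  rw [mem_mobiusCircle_iff hA, mem_mobiusCircle_iff hB]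
  have eA := circleForm_self_eq hxA hyA (homCoords w)
  have eB := circleForm_self_eq hxB hyB (homCoords w)
  rcases h with h | h
  · rw [mul_left_cancel₀ hdd (eB.trans (by rw [h, eA]))]
  · rw [mul_left_cancel₀ hdd (eB.trans (by rw [h, map_neg]; linear_combination eA) :
      _ = cross x y * conj (cross x y) * -circleForm A (homCoords w) (homCoords w)), neg_eq_zero]

lemma circlePairing_re_mul_normSq (hxA : circleForm A x x = 0) (hyA : circleForm A y y = 0)
    (hxB : circleForm B x x = 0) (hyB : circleForm B y y = 0) :
    (circlePairing A B).re * normSq (cross x y) =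
      2 * (circleForm A x y * conj (circleForm B x y)).re := by
  have h := circleForm_mixed_gram A B x y
  rw [hxA, hyA, hxB, hyB, circleForm_swap A x y, circleForm_swap B x y, Complex.mul_conj] at h
  have h' := congrArg Complex.re h
  simp only [Complex.mul_re, Complex.ofReal_re, Complex.ofReal_im, Complex.sub_re,
    Complex.add_re, Complex.neg_re, Complex.neg_im, Complex.conj_re, Complex.conj_im,
    Complex.zero_re, mul_zero] at h' ⊢
  linear_combination -h'

theorem subsingleton_inter_of_two_le_abs_circlePairing (hA : A.det = 1) (hB : B.det = 1)
    (hne : mobiusCircle A ≠ mobiusCircle B) (hP : 2 ≤ |(circlePairing A B).re|) :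
    (mobiusCircle A ∩ mobiusCircle B).Subsingleton := by
  intro w₁ h₁ w₂ h₂
  by_contra hw
  have hd := cross_homCoords_ne_zero hw
  have hxA := (mem_mobiusCircle_iff hA w₁).1 h₁.1
  have hyA := (mem_mobiusCircle_iff hA w₂).1 h₂.1
  have hxB := (mem_mobiusCircle_iff hB w₁).1 h₁.2
  have hyB := (mem_mobiusCircle_iff hB w₂).1 h₂.2
  set c := circleForm A (homCoords w₁) (homCoords w₂)
  set c' := circleForm B (homCoords w₁) (homCoords w₂)
  set d := cross (homCoords w₁) (homCoords w₂)
  have hc : normSq c = normSq d := normSq_circleForm_eq hA hxA hyA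
  have hc' : normSq c' = normSq d := normSq_circleForm_eq hB hxB hyB
  have hN : 0 < normSq d := Complex.normSq_pos.2 hd
  have hplus : 0 < normSq (c + c') := Complex.normSq_pos.2 fun h =>
    hne (mobiusCircle_eq_of_circleForm_eq_or_eq_neg hA hB hxA hyA hxB hyB hd
      (Or.inr (eq_neg_of_add_eq_zero_right h)))
  have hminus : 0 < normSq (c - c') := Complex.normSq_pos.2 fun h =>
    hne (mobiusCircle_eq_of_circleForm_eq_or_eq_neg hA hB hxA hyA hxB hyB hd
      (Or.inl (sub_eq_zero.1 h).symm))
  have hre := circlePairing_re_mul_normSq hxA hyA hxB hyB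
  rw [Complex.normSq_add, hc, hc'] at hplus
  rw [Complex.normSq_sub, hc, hc'] at hminus
  have : |(circlePairing A B).re| < 2 := abs_lt.2 ⟨by nlinarith, by nlinarith⟩
  linarith

end TwoCommonPoints

lemma circlePairing_re (A B : Matrix (Fin 2) (Fin 2) ℂ) :
    (circlePairing A B).re =
      -4 * ((conj (A 1 0) * A 1 1).im * (conj (B 0 0) * B 0 1).im +
        (conj (B 1 0) * B 1 1).im * (conj (A 0 0) * A 0 1).im) +
      2 * ((conj (A 0 0) * A 1 1 - A 1 0 * conj (A 0 1)).re *
          (conj (B 0 0) * B 1 1 - B 1 0 * conj (B 0 1)).re +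
        (conj (A 0 0) * A 1 1 - A 1 0 * conj (A 0 1)).im *
          (conj (B 0 0) * B 1 1 - B 1 0 * conj (B 0 1)).im) := by
  simp only [circlePairing, Complex.add_re, Complex.sub_re, Complex.mul_re, Complex.mul_im,
    Complex.sub_im, Complex.conj_re, Complex.conj_im]
  ring

section Integrality

variable {S : Subring ℂ} {s : ℝ} {A B : Matrix (Fin 2) (Fin 2) ℂ}

lemma exists_circle_coeffs (hS : ∀ p ∈ S, ∀ q ∈ S, ∃ n : ℤ, (conj p * q).im = n * s)
    (hAS : ∀ i j, A i j ∈ S) (hA : A.det = 1) :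
    ∃ a b k m : ℤ, (conj (A 1 0) * A 1 1).im = a * s ∧ (conj (A 0 0) * A 0 1).im = b * s ∧
      (conj (A 0 0) * A 1 1 - A 1 0 * conj (A 0 1)).re = 1 + 2 * k * s ^ 2 ∧
      (conj (A 0 0) * A 1 1 - A 1 0 * conj (A 0 1)).im = m * s := by
  have him (i j : Fin 2) : ∃ n : ℤ, (A i j).im = n * s := by
    simpa using hS 1 S.one_mem _ (hAS i j)
  obtain ⟨a, ha⟩ := hS _ (hAS 1 0) _ (hAS 1 1)
  obtain ⟨b, hb⟩ := hS _ (hAS 0 0) _ (hAS 0 1)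
  obtain ⟨n₁, hn₁⟩ := hS _ (hAS 0 0) _ (hAS 1 1)
  obtain ⟨n₂, hn₂⟩ := hS _ (hAS 1 0) _ (hAS 0 1)
  obtain ⟨p₀₀, h₀₀⟩ := him 0 0
  obtain ⟨p₀₁, h₀₁⟩ := him 0 1
  obtain ⟨p₁₀, h₁₀⟩ := him 1 0
  obtain ⟨p₁₁, h₁₁⟩ := him 1 1
  refine ⟨a, b, p₀₀ * p₁₁ - p₀₁ * p₁₀, n₁ + n₂, ha, hb, ?_, ?_⟩
  · have hre := congrArg Complex.re (Matrix.det_fin_two A ▸ hA)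
    simp only [Complex.sub_re, Complex.mul_re, Complex.one_re] at hre
    simp only [Complex.sub_re, Complex.mul_re, Complex.conj_re, Complex.conj_im]
    push_cast
    linear_combination hre + 2 * (A 1 1).im * h₀₀ + 2 * p₀₀ * s * h₁₁ -
      2 * (A 0 1).im * h₁₀ - 2 * p₁₀ * s * h₀₁
  · rw [Complex.sub_im, im_mul_conj]
    push_cast
    linear_combination hn₁ + hn₂

lemma even_sub_mul_of_circle_coeffs {D a b k m : ℤ} (hD : 4 * s ^ 2 = D) (hs : s ≠ 0)
    (hA : A.det = 1) (ha : (conj (A 1 0) * A 1 1).im = a * s)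
    (hb : (conj (A 0 0) * A 0 1).im = b * s)
    (hk : (conj (A 0 0) * A 1 1 - A 1 0 * conj (A 0 1)).re = 1 + 2 * k * s ^ 2)
    (hm : (conj (A 0 0) * A 1 1 - A 1 0 * conj (A 0 1)).im = m * s) :
    Even (m - D * k) := by
  have hself : (circlePairing A A).re = 2 := by
    rw [circlePairing_self, hA, map_one]
    norm_num
  rw [circlePairing_re, ha, hb, hk, hm] at hself
  have hcirc : -4 * a * b + 4 * k + D * k ^ 2 + m ^ 2 = 0 := by
    have h : (2 * s ^ 2) * ((-4 * a * b + 4 * k + D * k ^ 2 + m ^ 2 : ℤ) : ℝ) = 0 := by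
      push_cast
      rw [← hD]
      linear_combination hself
    exact_mod_cast (mul_eq_zero.1 h).resolve_left (by positivity)
  have hev : Even (m ^ 2 + D * k ^ 2) := ⟨2 * (a * b - k), by linear_combination hcirc⟩
  simp only [Int.even_add, Int.even_pow, Int.even_mul, Int.even_sub] at hev ⊢
  tauto

theorem exists_circlePairing_re_eq
    (hS : ∀ p ∈ S, ∀ q ∈ S, ∃ n : ℤ, (conj p * q).im = n * s)
    {D : ℤ} (hD : 4 * s ^ 2 = D) (hs : s ≠ 0)
    (hAS : ∀ i j, A i j ∈ S) (hBS : ∀ i j, B i j ∈ S) (hA : A.det = 1) (hB : B.det = 1) :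
    ∃ j : ℤ, (circlePairing A B).re = 2 - D * j := by
  obtain ⟨a, b, k, m, ha, hb, hk, hm⟩ := exists_circle_coeffs hS hAS hA
  obtain ⟨a', b', k', m', ha', hb', hk', hm'⟩ := exists_circle_coeffs hS hBS hB
  obtain ⟨u, hu⟩ := even_sub_mul_of_circle_coeffs hD hs hA ha hb hk hm
  obtain ⟨u', hu'⟩ := even_sub_mul_of_circle_coeffs hD hs hB ha' hb' hk' hm'
  obtain ⟨v, hv⟩ := Int.even_mul_succ_self D
  obtain rfl : m = D * k + 2 * u := by linarith
  obtain rfl : m' = D * k' + 2 * u' := by linarith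
  refine ⟨a * b' + a' * b - (k + k') - v * k * k' - D * (k * u' + k' * u) - 2 * u * u', ?_⟩
  have hvR : ((D * (D + 1) : ℤ) : ℝ) = ((v + v : ℤ) : ℝ) := congrArg _ hv
  rw [circlePairing_re, ha, hb, hk, hm, ha', hb', hk', hm']
  push_cast at hvR ⊢
  rw [← hD] at hvR ⊢
  linear_combination (2 * s ^ 2 * k * k') * hvR

end Integrality

section QuadraticField

variable {K : Type} [Field K] [NumberField K]

lemma isTotallyComplex_of_finrank_eq_two (hdeg : Module.finrank ℚ K = 2)
    (hdisc : discr K < 0) : IsTotallyComplex K := by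
  have hrank := InfinitePlace.card_add_two_mul_card_eq_rank K
  have hsign := sign_discr K
  rw [Int.sign_eq_neg_one_of_neg hdisc] at hsign
  have hc : InfinitePlace.nrComplexPlaces K ≠ 0 := by
    intro h
    rw [h] at hsign
    norm_num at hsign
  rw [← nrRealPlaces_eq_zero_iff]
  omega

noncomputable def embeddingsEquiv (hdeg : Module.finrank ℚ K = 2) (hdisc : discr K < 0)
    (ι : K →+* ℂ) : Fin 2 ≃ (K →ₐ[ℚ] ℂ) :=
  Equiv.ofBijective ![ι.toRatAlgHom, (ComplexEmbedding.conjugate ι).toRatAlgHom] <| by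
    have := isTotallyComplex_of_finrank_eq_two hdeg hdisc
    have hne : (ComplexEmbedding.conjugate ι).toRatAlgHom ≠ ι.toRatAlgHom := fun h =>
      IsTotallyComplex.complexEmbedding_not_isReal ι
        (ComplexEmbedding.isReal_iff.2 ((RingHom.equivRatAlgHom K ℂ).injective h))
    refine (Fintype.bijective_iff_injective_and_card _).2 ⟨?_, by simp [AlgHom.card, hdeg]⟩
    intro i j
    fin_cases i <;> fin_cases j <;> simp [hne, hne.symm]

lemma discr_eq_sq (hdeg : Module.finrank ℚ K = 2) (hdisc : discr K < 0) (ι : K →+* ℂ)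
    (b : Module.Basis (Fin 2) ℤ (𝓞 K)) :
    (discr K : ℂ) = (ι (b 0) * conj (ι (b 1)) - conj (ι (b 0)) * ι (b 1)) ^ 2 := by
  have h := Algebra.discr_eq_det_embeddingsMatrixReindex_pow_two ℚ ℂ
    (b.localizationLocalization ℚ (nonZeroDivisors ℤ) K) (embeddingsEquiv hdeg hdisc ι)
  rw [Algebra.discr_localizationLocalization, discr_eq_discr K b, eq_intCast, map_intCast] at h
  rw [h, Matrix.det_fin_two]
  simp [Algebra.embeddingsMatrixReindex, Algebra.embeddingsMatrix, embeddingsEquiv]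

theorem exists_im_conj_mul_eq_intCast_mul (hdeg : Module.finrank ℚ K = 2)
    (hdisc : discr K < 0) (ι : K →+* ℂ) :
    ∃ s : ℝ, 4 * s ^ 2 = -discr K ∧
      ∀ p q : 𝓞 K, ∃ n : ℤ, (conj (ι p) * ι q).im = n * s := by
  let b := Module.finBasisOfFinrankEq ℤ (𝓞 K) (by rw [RingOfIntegers.rank, hdeg])
  have hι (p : 𝓞 K) : ι p = b.repr p 0 * ι (b 0) + b.repr p 1 * ι (b 1) := by
    conv_lhs => rw [← b.sum_repr p]
    simp [Fin.sum_univ_two]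
  refine ⟨(conj (ι (b 0)) * ι (b 1)).im, ?_, fun p q =>
    ⟨_, by rw [hι p, hι q, im_conj_mul_intCast_comb]⟩⟩
  set w := conj (ι (b 0)) * ι (b 1)
  have hw : ι (b 0) * conj (ι (b 1)) - conj (ι (b 0)) * ι (b 1) = -(w - conj w) := by
    simp only [w, map_mul, Complex.conj_conj]
    ring
  have h : ((discr K : ℝ) : ℂ) = ((-4 * w.im ^ 2 : ℝ) : ℂ) := by
    rw [Complex.ofReal_intCast, discr_eq_sq hdeg hdisc ι b, hw, Complex.sub_conj]
    push_cast
    linear_combination (4 * (w.im : ℂ) ^ 2) * Complex.I_sq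
  linarith [Complex.ofReal_injective h]

end QuadraticField

lemma two_le_abs_two_sub_mul {D : ℤ} (hD : 4 ≤ D) (j : ℤ) : 2 ≤ |2 - D * j| := by
  rcases le_or_gt j 0 with h | h
  · exact le_abs.2 (Or.inl (by nlinarith))
  · exact le_abs.2 (Or.inr (by nlinarith))

end BianchiCircles

open BianchiCircles

/-- If `Δ ≠ −3` (i.e. `K ≠ ℚ(√−3)`), then two distinct `K`-Bianchi
circles have at most one common point in `ℂ ∪ {∞}`: they are disjoint or tangent. -/
theorem stmt5 (K : Type) [Field K] [NumberField K]
    (hdeg : Module.finrank ℚ K = 2) (hdisc : NumberField.discr K < 0)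
    (hne3 : NumberField.discr K ≠ -3)
    (ι : K →+* ℂ)
    (M M' : Matrix.SpecialLinearGroup (Fin 2) (RingOfIntegers K))
    (hne : bianchiCircle K ι M ≠ bianchiCircle K ι M') :
    Set.Subsingleton (bianchiCircle K ι M ∩ bianchiCircle K ι M') := by
  let f := ι.comp (algebraMap (𝓞 K) K)
  have hdet (N : Matrix.SpecialLinearGroup (Fin 2) (𝓞 K)) : (f.mapMatrix N.1).det = 1 := by
    rw [← RingHom.map_det, N.det_coe, map_one]
  have hbianchi (N : Matrix.SpecialLinearGroup (Fin 2) (𝓞 K)) :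
      bianchiCircle K ι N = mobiusCircle (f.mapMatrix N.1) := rfl
  obtain ⟨s, hsD, hS⟩ := exists_im_conj_mul_eq_intCast_mul hdeg hdisc ι
  have hs : s ≠ 0 := by
    rintro rfl
    exact discr_ne_zero K (by exact_mod_cast (by linarith : (discr K : ℝ) = 0))
  obtain ⟨j, hj⟩ := exists_circlePairing_re_eq (S := f.range) (D := -discr K)
    (A := f.mapMatrix M.1) (B := f.mapMatrix M'.1)
    (by rintro _ ⟨p, rfl⟩ _ ⟨q, rfl⟩; exact hS p q) (by push_cast; exact hsD) hs
    (fun i j => ⟨M i j, rfl⟩) (fun i j => ⟨M' i j, rfl⟩) (hdet M) (hdet M')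
  rw [hbianchi, hbianchi] at hne ⊢
  refine subsingleton_inter_of_two_le_abs_circlePairing (hdet M) (hdet M') hne ?_
  have hD : 4 ≤ -discr K := by
    have := abs_discr_gt_two (K := K) (by omega)
    rw [abs_of_neg hdisc] at this
    omega
  rw [hj]
  exact_mod_cast two_le_abs_two_sub_mul hD j
end

section
/- Let M = [[α,γ],[β,δ]] ∈ SL₂(O_K) with β ≠ 0, and let M′ = M·[[1, τ],[0, −1]] (so M′ = [[α, ατ−γ],[β, βτ−δ]], of determinant −1). Then the circles M(ℝ̂) and M′(ℝ̂) intersect in exactly the single point α/β (they are tangent at α/β), and the sum of their curvatures satisfies b(M) + b(M′) = √(−Δ)·N(β). -/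
/-!
Both circles pass through `α/β`, the image of `∞`. A second common finite point
`(αx+γ)/(βx+δ) = (αy+ατ−γ)/(βy+βτ−δ)` would, after clearing denominators and using
`αδ − γβ ≠ 0`, force `τ = −(x+y)` to be real; likewise `∞` on both circles would force
`τ = δ/β + (βτ−δ)/β` to be real. The curvature identity is the computation
`b(M) + b(M′) = i (τ̄ − τ) N(β) = 2 Im(τ) N(β)`, and `2 Im(τ) = √(−Δ)`.
-/

open Complex ComplexConjugate NumberField OnePoint

/-- The curvature `i(βδ̄−β̄δ)` of the oriented circle `M(ℝ̂)` for `M = [[α,γ],[β,δ]]`. -/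
noncomputable def curv (β δ : ℂ) : ℂ := Complex.I * (β * conj δ - conj β * δ)

/-- The curvature-centre `i(αδ̄−γβ̄)` of the oriented circle `M(ℝ̂)` for `M = [[α,γ],[β,δ]]`. -/
noncomputable def curvCenter (α β γ δ : ℂ) : ℂ := Complex.I * (α * conj δ - γ * conj β)

/-- The curvature of the `K`-Bianchi circle attached to `M ∈ SL₂(O_K)`. -/
noncomputable def curvM (K : Type) [Field K] [NumberField K] (ι : K →+* ℂ)
    (M : Matrix.SpecialLinearGroup (Fin 2) (RingOfIntegers K)) : ℂ :=
  curv (emb K ι (M.1 1 0)) (emb K ι (M.1 1 1))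

/-- The curvature-centre of the `K`-Bianchi circle attached to `M ∈ SL₂(O_K)`. -/
noncomputable def curvCenterM (K : Type) [Field K] [NumberField K] (ι : K →+* ℂ)
    (M : Matrix.SpecialLinearGroup (Fin 2) (RingOfIntegers K)) : ℂ :=
  curvCenter (emb K ι (M.1 0 0)) (emb K ι (M.1 1 0)) (emb K ι (M.1 0 1)) (emb K ι (M.1 1 1))
/-- The complex number `τ` attached to a discriminant `Δ < 0`: with `√Δ := i·√(−Δ)`,
`τ = √Δ/2` if `Δ ≡ 0 (mod 4)` and `τ = (1+√Δ)/2` otherwise (i.e. if `Δ ≡ 1 (mod 4)`),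
so that `(1, τ)` is a `ℤ`-basis of `O_K`. -/
noncomputable def tauC (Δ : ℤ) : ℂ :=
  if Δ % 4 = 0 then Complex.I * (Real.sqrt (-(Δ : ℝ)) : ℂ) / 2
  else (1 + Complex.I * (Real.sqrt (-(Δ : ℝ)) : ℂ)) / 2

theorem det_fin_two_map_eq_one {R S : Type*} [CommRing R] [CommRing S] (f : R →+* S)
    (M : Matrix.SpecialLinearGroup (Fin 2) R) :
    f (M.1 0 0) * f (M.1 1 1) - f (M.1 0 1) * f (M.1 1 0) = 1 := by
  have h := congrArg f M.det_coe
  rwa [Matrix.det_fin_two, map_one, map_sub, map_mul, map_mul] at h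

theorem emb_det_eq_one (K : Type) [Field K] [NumberField K] (ι : K →+* ℂ)
    (M : Matrix.SpecialLinearGroup (Fin 2) (RingOfIntegers K)) :
    emb K ι (M.1 0 0) * emb K ι (M.1 1 1) - emb K ι (M.1 0 1) * emb K ι (M.1 1 0) = 1 :=
  det_fin_two_map_eq_one (ι.comp (algebraMap (RingOfIntegers K) K)) M

theorem tauC_im (Δ : ℤ) : (tauC Δ).im = Real.sqrt (-(Δ : ℝ)) / 2 := by
  unfold tauC
  split <;> simp

section Mobius

variable {α β γ δ : ℂ}

theorem coe_mem_mobius_iff {z : ℂ} :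
    (z : OnePoint ℂ) ∈ mobius α β γ δ ↔ z ∈ mobiusFin α β γ δ := by
  simp [mobius]

theorem infty_mem_mobius_iff :
    (∞ : OnePoint ℂ) ∈ mobius α β γ δ ↔ β = 0 ∨ ∃ x : ℝ, δ = β * x := by
  simp [mobius]

theorem div_mem_mobiusFin (hβ : β ≠ 0) : α / β ∈ mobiusFin α β γ δ :=
  Or.inr ⟨hβ, rfl⟩

theorem eq_div_of_mem_mobiusFin_inter {τ z : ℂ} (hdet : α * δ - γ * β ≠ 0) (hτ : τ.im ≠ 0)
    (h : z ∈ mobiusFin α β γ δ) (h' : z ∈ mobiusFin α β (α * τ - γ) (β * τ - δ)) :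
    z = α / β := by
  rcases h with ⟨x, hx0, rfl⟩ | ⟨-, rfl⟩
  · rcases h' with ⟨y, hy0, hxy⟩ | ⟨-, hxy⟩
    · rw [div_eq_div_iff hx0 hy0] at hxy
      have hsum : (α * δ - γ * β) * (τ + x + y) = 0 := by linear_combination -hxy
      have hτreal : τ = ((-(x + y) : ℝ) : ℂ) := by
        push_cast
        linear_combination (mul_eq_zero.1 hsum).resolve_left hdet
      exact absurd (by simp [hτreal]) hτ
    · exact hxy
  · rfl

theorem infty_not_mem_mobius_inter {τ : ℂ} (hβ : β ≠ 0) (hτ : τ.im ≠ 0) :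
    (∞ : OnePoint ℂ) ∉ mobius α β γ δ ∩ mobius α β (α * τ - γ) (β * τ - δ) := by
  rintro ⟨h, h'⟩
  obtain ⟨x, hx⟩ := (infty_mem_mobius_iff.1 h).resolve_left hβ
  obtain ⟨y, hy⟩ := (infty_mem_mobius_iff.1 h').resolve_left hβ
  have hτreal : τ = ((x + y : ℝ) : ℂ) := by
    push_cast
    exact mul_left_cancel₀ hβ (by linear_combination hx + hy)
  exact hτ (by simp [hτreal])

theorem mobius_inter_mobius_mul_eq_singleton {τ : ℂ} (hdet : α * δ - γ * β ≠ 0)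
    (hβ : β ≠ 0) (hτ : τ.im ≠ 0) :
    mobius α β γ δ ∩ mobius α β (α * τ - γ) (β * τ - δ) = {((α / β : ℂ) : OnePoint ℂ)} := by
  ext w
  induction w using OnePoint.rec with
  | infty =>
    simpa using infty_not_mem_mobius_inter hβ hτ
  | coe z =>
    simp only [Set.mem_inter_iff, coe_mem_mobius_iff, Set.mem_singleton_iff, coe_eq_coe]
    constructor
    · exact fun ⟨h, h'⟩ => eq_div_of_mem_mobiusFin_inter hdet hτ h h'
    · rintro rfl
      exact ⟨div_mem_mobiusFin hβ, div_mem_mobiusFin hβ⟩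

end Mobius

theorem curv_add_curv_mul_sub (β δ τ : ℂ) :
    curv β δ + curv β (β * τ - δ) = 2 * τ.im * (β * conj β) := by
  have hτ : τ - conj τ = 2 * τ.im * I := by rw [Complex.sub_conj]; push_cast; ring
  simp only [curv, map_sub, map_mul]
  linear_combination (-I * β * conj β) * hτ - (2 * τ.im * β * conj β) * I_sq

theorem stmt7_general (K : Type) [Field K] [NumberField K]
    (hdisc : NumberField.discr K < 0)
    (ι : K →+* ℂ)
    (M : Matrix.SpecialLinearGroup (Fin 2) (RingOfIntegers K))
    (α β γ δ τ : ℂ)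
    (hα : α = emb K ι (M.1 0 0)) (hγ : γ = emb K ι (M.1 0 1))
    (hβ : β = emb K ι (M.1 1 0)) (hδ : δ = emb K ι (M.1 1 1))
    (hβ0 : β ≠ 0) (hτ : τ = tauC (NumberField.discr K)) :
    mobius α β γ δ ∩ mobius α β (α * τ - γ) (β * τ - δ)
        = {((α / β : ℂ) : OnePoint ℂ)}
      ∧ curv β δ + curv β (β * τ - δ)
        = (Real.sqrt (-(NumberField.discr K : ℝ)) : ℂ) * (β * conj β) := by
  have hdet : α * δ - γ * β = 1 := by
    subst hα hβ hγ hδ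
    exact emb_det_eq_one K ι M
  have hτim : τ.im = Real.sqrt (-(NumberField.discr K : ℝ)) / 2 := hτ ▸ tauC_im _
  have hτim_pos : 0 < τ.im := by
    have : (NumberField.discr K : ℝ) < 0 := by exact_mod_cast hdisc
    exact hτim ▸ half_pos (Real.sqrt_pos.2 (neg_pos.2 this))
  refine ⟨mobius_inter_mobius_mul_eq_singleton (by simp [hdet]) hβ0 hτim_pos.ne', ?_⟩
  rw [curv_add_curv_mul_sub, hτim]
  push_cast
  ring

/-- For `M = [[α,γ],[β,δ]] ∈ SL₂(O_K)` with `β ≠ 0`, and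
`M′ = M·[[1,τ],[0,−1]] = [[α, ατ−γ],[β, βτ−δ]]`, the circles `M(ℝ̂)` and `M′(ℝ̂)`
intersect in exactly the single point `α/β`, and `b(M) + b(M′) = √(−Δ)·N(β)`. -/
theorem stmt7 (K : Type) [Field K] [NumberField K]
    (hdeg : Module.finrank ℚ K = 2) (hdisc : NumberField.discr K < 0)
    (ι : K →+* ℂ)
    (M : Matrix.SpecialLinearGroup (Fin 2) (RingOfIntegers K))
    (α β γ δ τ : ℂ)
    (hα : α = emb K ι (M.1 0 0)) (hγ : γ = emb K ι (M.1 0 1))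
    (hβ : β = emb K ι (M.1 1 0)) (hδ : δ = emb K ι (M.1 1 1))
    (hβ0 : β ≠ 0) (hτ : τ = tauC (NumberField.discr K)) :
    mobius α β γ δ ∩ mobius α β (α * τ - γ) (β * τ - δ)
        = {((α / β : ℂ) : OnePoint ℂ)}
      ∧ curv β δ + curv β (β * τ - δ)
        = (Real.sqrt (-(NumberField.discr K : ℝ)) : ℂ) * (β * conj β) :=
  stmt7_general K hdisc ι M α β γ δ τ hα hγ hβ hδ hβ0 hτ
end

section
/- Let M = [[α,γ],[β,δ]] ∈ SL₂(O_K). Then the set of curvatures of the circles immediately tangent to M(ℝ̂), namely { b( M·N·[[1,τ],[0,−1]] ) : N ∈ SL₂(ℤ) }, equals the set of values { √(−Δ)·N(mβ + nδ) − b(M) : m, n ∈ ℤ with gcd(m,n) = 1 } of the translated norm form at primitive vectors of the lattice ℤβ + ℤδ. -/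
/-!
The bottom row of `M·N·[[1,τ],[0,−1]]` is `(x, xτ − y)` with `(x, y) = (β, δ)·N`. Because
`τ − τ̄ = i√(−Δ)`, the curvature satisfies `b(x, xτ − y) = √(−Δ)·N(x) − b(x, y)`, and a real
change of basis multiplies `b` by its determinant, so `b(x, y) = det N · b(β, δ) = b(M)`. Finally
the first columns of matrices in `SL₂(ℤ)` are exactly the coprime pairs.
-/

open Complex ComplexConjugate NumberField OnePoint

open Matrix MatrixGroups

lemma curv_ofReal_lincomb (β δ : ℂ) (a b c d : ℝ) :
    curv (a * β + c * δ) (b * β + d * δ) = (a * d - b * c) * curv β δ := by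
  simp only [curv, map_add, map_mul, conj_ofReal]
  ring

lemma curv_mul_sub {τ : ℂ} {r : ℝ} (hτ : τ - conj τ = I * r) (x y : ℂ) :
    curv x (x * τ - y) = r * (x * conj x) - curv x y := by
  have hconj : conj τ = τ - I * r := by linear_combination -hτ
  simp only [curv, map_sub, map_mul, hconj]
  linear_combination (-(r : ℂ) * x * conj x) * I_sq

lemma tauC_sub_conj (Δ : ℤ) : tauC Δ - conj (tauC Δ) = I * (Real.sqrt (-(Δ : ℝ)) : ℂ) := by
  unfold tauC
  split_ifs <;>
    simp only [map_div₀, map_add, map_mul, map_one, conj_I, conj_ofReal, map_ofNat] <;> ring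

lemma curv_mul_SL2Z_mul_tangent {τ : ℂ} {r : ℝ} (hτ : τ - conj τ = I * r)
    (A : Matrix (Fin 2) (Fin 2) ℂ) (N : SL(2, ℤ)) :
    curv ((A * N.1.map (fun n : ℤ => (n : ℂ)) * !![1, τ; 0, -1]) 1 0)
        ((A * N.1.map (fun n : ℤ => (n : ℂ)) * !![1, τ; 0, -1]) 1 1)
      = r * ((N 0 0 * A 1 0 + N 1 0 * A 1 1) * conj (N 0 0 * A 1 0 + N 1 0 * A 1 1))
        - curv (A 1 0) (A 1 1) := by
  have hdet : ((N 0 0 : ℂ) * N 1 1 - N 0 1 * N 1 0) = 1 := by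
    exact_mod_cast (det_fin_two N.1).symm.trans N.2
  have hlin := curv_ofReal_lincomb (A 1 0) (A 1 1) (N 0 0) (N 0 1) (N 1 0) (N 1 1)
  simp only [ofReal_intCast, hdet, one_mul] at hlin
  have hentries :
      (A * N.1.map (fun n : ℤ => (n : ℂ)) * !![1, τ; 0, -1]) 1 0
          = N 0 0 * A 1 0 + N 1 0 * A 1 1 ∧
      (A * N.1.map (fun n : ℤ => (n : ℂ)) * !![1, τ; 0, -1]) 1 1
          = (N 0 0 * A 1 0 + N 1 0 * A 1 1) * τ - (N 0 1 * A 1 0 + N 1 1 * A 1 1) := by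
    simp only [mul_apply, Fin.sum_univ_two, map_apply, of_apply, cons_val', cons_val_zero,
      cons_val_one, empty_val', cons_val_fin_one]
    constructor <;> ring
  rw [hentries.1, hentries.2, curv_mul_sub hτ, hlin]

theorem stmt8_general (K : Type) [Field K] [NumberField K]
    (ι : K →+* ℂ)
    (M : Matrix.SpecialLinearGroup (Fin 2) (RingOfIntegers K))
    (β δ τ : ℂ)
    (hβ : β = emb K ι (M.1 1 0)) (hδ : δ = emb K ι (M.1 1 1))
    (hτ : τ = tauC (NumberField.discr K)) :
    {z : ℂ | ∃ N : Matrix.SpecialLinearGroup (Fin 2) ℤ,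
        z = curv ((M.1.map (emb K ι) * N.1.map (fun n : ℤ => (n : ℂ))
                    * !![1, τ; 0, -1]) 1 0)
                 ((M.1.map (emb K ι) * N.1.map (fun n : ℤ => (n : ℂ))
                    * !![1, τ; 0, -1]) 1 1)}
      = {z : ℂ | ∃ m n : ℤ, Int.gcd m n = 1 ∧
          z = (Real.sqrt (-(NumberField.discr K : ℝ)) : ℂ)
                * (((m : ℂ) * β + (n : ℂ) * δ) * conj ((m : ℂ) * β + (n : ℂ) * δ))
              - curv β δ} := by
  have hτ' : τ - conj τ = I * (Real.sqrt (-(NumberField.discr K : ℝ)) : ℂ) :=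
    hτ ▸ tauC_sub_conj _
  have hcurv (N : SL(2, ℤ)) := curv_mul_SL2Z_mul_tangent hτ' (M.1.map (emb K ι)) N
  simp only [map_apply, ← hβ, ← hδ] at hcurv
  ext z
  constructor
  · rintro ⟨N, rfl⟩
    exact ⟨N 0 0, N 1 0, Int.isCoprime_iff_gcd_eq_one.mp (N.isCoprime_col 0), hcurv N⟩
  · rintro ⟨m, n, hmn, rfl⟩
    obtain ⟨N, hm, hn⟩ := (Int.isCoprime_iff_gcd_eq_one.mpr hmn).exists_SL2_col 0
    exact ⟨N, by rw [hcurv N, hm, hn]⟩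

/-- For `M = [[α,γ],[β,δ]] ∈ SL₂(O_K)`, the set of curvatures
`b(M·N·[[1,τ],[0,−1]])` of the circles immediately tangent to `M(ℝ̂)`, as `N` ranges over
`SL₂(ℤ)`, equals the set of values `√(−Δ)·N(mβ+nδ) − b(M)` of the translated norm form
at primitive vectors `mβ+nδ` (`gcd(m,n) = 1`) of the lattice `ℤβ + ℤδ`. -/
theorem stmt8 (K : Type) [Field K] [NumberField K]
    (hdeg : Module.finrank ℚ K = 2) (hdisc : NumberField.discr K < 0)
    (ι : K →+* ℂ)
    (M : Matrix.SpecialLinearGroup (Fin 2) (RingOfIntegers K))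
    (β δ τ : ℂ)
    (hβ : β = emb K ι (M.1 1 0)) (hδ : δ = emb K ι (M.1 1 1))
    (hτ : τ = tauC (NumberField.discr K)) :
    {z : ℂ | ∃ N : Matrix.SpecialLinearGroup (Fin 2) ℤ,
        z = curv ((M.1.map (emb K ι) * N.1.map (fun n : ℤ => (n : ℂ))
                    * !![1, τ; 0, -1]) 1 0)
                 ((M.1.map (emb K ι) * N.1.map (fun n : ℤ => (n : ℂ))
                    * !![1, τ; 0, -1]) 1 1)}
      = {z : ℂ | ∃ m n : ℤ, Int.gcd m n = 1 ∧
          z = (Real.sqrt (-(NumberField.discr K : ℝ)) : ℂ)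
                * (((m : ℂ) * β + (n : ℂ) * δ) * conj ((m : ℂ) * β + (n : ℂ) * δ))
              - curv β δ} :=
  stmt8_general K ι M β δ τ hβ hδ hτ
end

section
/- Let Λ ⊆ O_K be an additive subgroup of finite index, and let Ord(Λ) := {α ∈ O_K : αΛ ⊆ Λ} be its multiplier order. Then the following are equivalent: (i) Λ admits a ℤ-basis β, δ consisting of coprime elements, i.e. Λ = ℤβ + ℤδ with βO_K + δO_K = O_K; (ii) the index [O_K : Λ] equals the index [O_K : Ord(Λ)] (the conductor of the order Ord(Λ)). -/
/-!
Choose a `ℤ`-basis `1, ω` of `O_K`, with `ω² = s + tω`. In Hermite normal form `Λ = ℤa + ℤξ`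
with `ξ = b + cω` and `a, c > 0`, so that `[O_K : Λ] = ac`. Since every `ℤ`-basis of `Λ` generates
the same ideal as `a, ξ`, condition (i) says that `a` and `ξ` are coprime in `O_K`; multiplying by
the conjugate `ξ'` of `ξ` shows that this means `gcd(a, N) = 1` for the norm
`N = ξξ' = b² + bct - c²s`.

The multiplier order contains `ℤ`, so it is `ℤ + ℤFω` with `F = [O_K : Ord(Λ)]`, and `vω` is a
multiplier iff `F ∣ v`. A common divisor `d` of `a` and `N` makes `(ac/d)ω` a multiplier, so
`F ∣ ac/d`; conversely, reading off the coordinates of `Fω·a` and `Fω·ξ` in `Λ` gives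
`c ∣ Fa` and `ac ∣ FN`, which force `ac ∣ F` when `gcd(a, N) = 1`. As `F ∣ ac` always, `F = ac`
holds exactly when `gcd(a, N) = 1`.
-/

open Complex ComplexConjugate NumberField

/-- The multiplier order `Ord(Λ) = {a : a·Λ ⊆ Λ}` of a lattice `Λ`, as an additive
subgroup of the ambient ring. -/
def multOrd {R : Type*} [CommRing R] (Λ : AddSubgroup R) : AddSubgroup R where
  carrier := {a | ∀ x ∈ Λ, a * x ∈ Λ}
  add_mem' := by
    intro a b ha hb x hx
    simpa [add_mul] using Λ.add_mem (ha x hx) (hb x hx)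
  zero_mem' := by
    intro x hx
    simpa using Λ.zero_mem
  neg_mem' := by
    intro a ha x hx
    simpa [neg_mul] using Λ.neg_mem (ha x hx)

theorem AddSubgroup.index_eq_index_comap_mul_index_map {G G' G'' : Type*} [AddCommGroup G]
    [AddGroup G'] [AddGroup G''] (H : AddSubgroup G) {f : G' →+ G} {π : G →+ G''}
    (hfπ : f.range = π.ker) (hπ : Function.Surjective π) :
    H.index = (H.comap f).index * (H.map π).index := by
  rw [← H.relIndex_mul_index (le_sup_right : H ≤ π.ker ⊔ H), relIndex_sup_right, index_comap,
    hfπ, sup_comm, ← comap_map_eq, index_comap_of_surjective _ hπ]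

theorem Int.mem_addSubgroup_iff_index_dvd (S : AddSubgroup ℤ) {m : ℤ} :
    m ∈ S ↔ (S.index : ℤ) ∣ m := by
  obtain ⟨g, rfl⟩ := Int.subgroup_cyclic S
  rw [← AddSubgroup.zmultiples_eq_closure, Int.index_zmultiples, Int.mem_zmultiples_iff,
    Int.natCast_natAbs, abs_dvd]

section MultiplierOrder

variable {R : Type*} [CommRing R]

theorem intCast_mem_multOrd (Λ : AddSubgroup R) (k : ℤ) : (k : R) ∈ multOrd Λ := fun x hx => by
  simpa [← zsmul_eq_mul] using Λ.zsmul_mem hx k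

theorem mem_multOrd_closure_pair_iff {u v x : R} :
    x ∈ multOrd (AddSubgroup.closure {u, v}) ↔
      x * u ∈ AddSubgroup.closure {u, v} ∧ x * v ∈ AddSubgroup.closure {u, v} := by
  refine ⟨fun h => ⟨h u (AddSubgroup.subset_closure (by simp)),
    h v (AddSubgroup.subset_closure (by simp))⟩, fun ⟨hu, hv⟩ y hy => ?_⟩
  obtain ⟨m, n, rfl⟩ := AddSubgroup.mem_closure_pair.1 hy
  rw [mul_add, mul_smul_comm, mul_smul_comm]
  exact add_mem (AddSubgroup.zsmul_mem _ hu m) (AddSubgroup.zsmul_mem _ hv n)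

theorem exists_isCoprime_closure_pair_iff {u v : R} :
    (∃ β δ : R, IsCoprime β δ ∧
        ∀ x, x ∈ AddSubgroup.closure {u, v} ↔ ∃ m n : ℤ, x = m • β + n • δ) ↔ IsCoprime u v := by
  refine ⟨fun ⟨β, δ, ⟨x, y, hxy⟩, hΛ⟩ => ?_, fun h => ⟨u, v, h, fun x => ?_⟩⟩
  · obtain ⟨m, n, hβ⟩ := AddSubgroup.mem_closure_pair.1 ((hΛ β).2 ⟨1, 0, by simp⟩)
    obtain ⟨m', n', hδ⟩ := AddSubgroup.mem_closure_pair.1 ((hΛ δ).2 ⟨0, 1, by simp⟩)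
    refine ⟨x * m + y * m', x * n + y * n', ?_⟩
    rw [← hxy, ← hβ, ← hδ]
    simp only [zsmul_eq_mul]
    ring
  · simp only [AddSubgroup.mem_closure_pair, eq_comm]

end MultiplierOrder

namespace Module.Basis

section Lattice

variable {M : Type*} [AddCommGroup M] (e : Basis (Fin 2) ℤ M)

theorem repr_zero_smul_add_repr_one_smul (x : M) : e.repr x 0 • e 0 + e.repr x 1 • e 1 = x := by
  rw [← Fin.sum_univ_two (fun i => e.repr x i • e i)]
  exact e.sum_repr x

theorem range_zmultiplesHom_eq_ker_coord_one :
    (zmultiplesHom M (e 0)).range = (e.coord 1).toAddMonoidHom.ker := by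
  ext x
  simp only [AddMonoidHom.mem_ker, LinearMap.toAddMonoidHom_coe, coord_apply,
    AddMonoidHom.mem_range, zmultiplesHom_apply]
  constructor
  · rintro ⟨k, rfl⟩
    simp
  · intro hx
    exact ⟨e.repr x 0, by simpa [hx] using e.repr_zero_smul_add_repr_one_smul x⟩

theorem coord_one_surjective : Function.Surjective (e.coord 1).toAddMonoidHom :=
  fun n => ⟨n • e 1, by simp⟩

theorem mem_iff_index_dvd_repr_one {H : AddSubgroup M} (h0 : e 0 ∈ H) {x : M} :
    x ∈ H ↔ (H.index : ℤ) ∣ e.repr x 1 := by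
  have hker : (e.coord 1).toAddMonoidHom.ker ≤ H := by
    rw [← range_zmultiplesHom_eq_ker_coord_one]
    rintro _ ⟨k, rfl⟩
    exact H.zsmul_mem h0 k
  have hH := AddSubgroup.comap_map_eq_self hker
  have hindex : H.index = (H.map (e.coord 1).toAddMonoidHom).index := by
    conv_lhs => rw [← hH]
    exact AddSubgroup.index_comap_of_surjective _ e.coord_one_surjective
  conv_lhs => rw [← hH]
  rw [hindex, ← Int.mem_addSubgroup_iff_index_dvd]
  rfl

theorem exists_eq_closure_pair (Λ : AddSubgroup M) [Λ.FiniteIndex] :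
    ∃ a b c : ℤ, 0 < a ∧ 0 < c ∧ (Λ.index : ℤ) = a * c ∧
      Λ = AddSubgroup.closure {a • e 0, b • e 0 + c • e 1} := by
  set π := (e.coord 1).toAddMonoidHom
  set A := Λ.comap (zmultiplesHom M (e 0))
  set C := Λ.map π
  have hindex := Λ.index_eq_index_comap_mul_index_map e.range_zmultiplesHom_eq_ker_coord_one
    e.coord_one_surjective
  have hA : A.index ≠ 0 := fun h => Λ.index_ne_zero_of_finite (by rw [hindex, h, zero_mul])
  have hC : C.index ≠ 0 := fun h => Λ.index_ne_zero_of_finite (by rw [hindex, h, mul_zero])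
  obtain ⟨ξ, hξ, hξc⟩ : (C.index : ℤ) ∈ C := (Int.mem_addSubgroup_iff_index_dvd C).2 dvd_rfl
  have haΛ : (A.index : ℤ) • e 0 ∈ Λ := (Int.mem_addSubgroup_iff_index_dvd A).2 dvd_rfl
  have hξ_eq : e.repr ξ 0 • e 0 + (C.index : ℤ) • e 1 = ξ := by
    rw [← hξc]
    exact e.repr_zero_smul_add_repr_one_smul ξ
  refine ⟨A.index, e.repr ξ 0, C.index, by omega, by omega, by rw [hindex]; push_cast; rfl, ?_⟩
  rw [hξ_eq]
  refine le_antisymm (fun x hx => ?_) ((AddSubgroup.closure_le _).2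
    (Set.insert_subset_iff.2 ⟨haΛ, Set.singleton_subset_iff.2 hξ⟩))
  obtain ⟨n, hn⟩ := (Int.mem_addSubgroup_iff_index_dvd C).1 ⟨x, hx, rfl⟩
  have hker : x - n • ξ ∈ π.ker := by
    rw [AddMonoidHom.mem_ker, map_sub, map_zsmul, hn, hξc, smul_eq_mul, mul_comm, sub_self]
  rw [← e.range_zmultiplesHom_eq_ker_coord_one] at hker
  obtain ⟨k, hk⟩ := hker
  rw [zmultiplesHom_apply] at hk
  obtain ⟨m, rfl⟩ := (Int.mem_addSubgroup_iff_index_dvd A).1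
    (show k • e 0 ∈ Λ from hk ▸ Λ.sub_mem hx (Λ.zsmul_mem hξ n))
  exact AddSubgroup.mem_closure_pair.2 ⟨m, n, by rw [smul_smul, mul_comm, hk, sub_add_cancel]⟩

end Lattice

section Ring

theorem intCast_dvd_iff {R ι : Type*} [Ring R] [Fintype ι] (B : Basis ι ℤ R) {d : ℤ} {x : R} :
    (d : R) ∣ x ↔ ∀ i, d ∣ B.repr x i := by
  constructor
  · rintro ⟨y, rfl⟩ i
    simp [← zsmul_eq_mul]
  · intro h
    choose k hk using h
    refine ⟨∑ i, k i • B i, ?_⟩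
    conv_lhs => rw [← B.sum_repr x]
    simp only [hk, Finset.mul_sum, ← zsmul_eq_mul, smul_smul]

variable {R : Type*} [CommRing R]

theorem exists_basis_zero_eq_one (B₀ : Basis (Fin 2) ℤ R) : ∃ B : Basis (Fin 2) ℤ R, B 0 = 1 := by
  set p := B₀.repr 1 0
  set q := B₀.repr 1 1
  have hpq : IsCoprime p q := by
    refine isRelPrime_iff_isCoprime.1 fun d hdp hdq => isUnit_of_dvd_one ?_
    have h1 : (d : R) ∣ 1 := B₀.intCast_dvd_iff.2 (Fin.forall_fin_two.2 ⟨hdp, hdq⟩)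
    simpa using B₀.intCast_dvd_iff.1 (h1.mul_right (B₀ 0)) 0
  obtain ⟨x, y, hxy⟩ := hpq
  have hdet : IsUnit (!![p, -y; q, x] : Matrix (Fin 2) (Fin 2) ℤ).det := by
    rw [Matrix.det_fin_two_of]
    convert isUnit_one
    linear_combination hxy
  refine ⟨B₀.map (Matrix.toLinearEquiv B₀ _ hdet), ?_⟩
  simpa [Matrix.toLinearEquiv_apply, Matrix.toLin_self] using B₀.repr_zero_smul_add_repr_one_smul 1

variable (B : Basis (Fin 2) ℤ R)

theorem repr_intCast_add_mul (hB : B 0 = 1) (m n : ℤ) :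
    B.repr ((m : R) + n * B 1) = Finsupp.single 0 m + Finsupp.single 1 n := by
  have : (m : R) + n * B 1 = m • B 0 + n • B 1 := by rw [hB, zsmul_eq_mul, zsmul_eq_mul, mul_one]
  rw [this, map_add, map_zsmul, map_zsmul, B.repr_self, B.repr_self, Finsupp.smul_single_one,
    Finsupp.smul_single_one]

theorem intCast_add_mul_inj (hB : B 0 = 1) {m n m' n' : ℤ}
    (h : (m : R) + n * B 1 = m' + n' * B 1) : m = m' ∧ n = n' := by
  have h := congrArg B.repr h
  simp only [B.repr_intCast_add_mul hB] at h
  exact ⟨by simpa using congrArg (· 0) h, by simpa using congrArg (· 1) h⟩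

theorem eq_intCast_add_mul (hB : B 0 = 1) (x : R) :
    x = (B.repr x 0 : R) + B.repr x 1 * B 1 := by
  conv_lhs => rw [← B.repr_zero_smul_add_repr_one_smul x]
  rw [hB, zsmul_eq_mul, zsmul_eq_mul, mul_one]

theorem intCast_mul_mem_iff_index_dvd (hB : B 0 = 1) {H : AddSubgroup R} (h1 : (1 : R) ∈ H)
    (v : ℤ) : (v : R) * B 1 ∈ H ↔ (H.index : ℤ) ∣ v := by
  rw [B.mem_iff_index_dvd_repr_one (hB ▸ h1), ← zero_add ((v : R) * B 1), ← Int.cast_zero,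
    repr_intCast_add_mul B hB]
  simp

end Ring

section QuadraticLattice

variable {R : Type*} [CommRing R] (B : Basis (Fin 2) ℤ R) {s t : ℤ}

theorem isCoprime_intCast_iff (hB : B 0 = 1) (hω : B 1 * B 1 = s + t * B 1) (a b c : ℤ) :
    IsCoprime (a : R) (b + c * B 1) ↔ IsCoprime a (b * b + b * c * t - c * c * s) := by
  set ξ' : R := ((b + c * t : ℤ) : R) + (-c : ℤ) * B 1
  have hnorm : (b + c * B 1) * ξ' = ((b * b + b * c * t - c * c * s : ℤ) : R) := by
    push_cast [ξ']
    linear_combination (-(c : R) ^ 2) * hω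
  constructor
  · rintro ⟨u, w, huw⟩
    refine isRelPrime_iff_isCoprime.1 fun d hda hdN => isUnit_of_dvd_one ?_
    have hdξ' : (d : R) ∣ ξ' := by
      have : ξ' = u * ξ' * a + w * ((b + c * B 1) * ξ') := by linear_combination (-ξ') * huw
      rw [this, hnorm]
      exact dvd_add (dvd_mul_of_dvd_right (Int.cast_dvd_cast _ _ hda) _)
        (dvd_mul_of_dvd_right (Int.cast_dvd_cast _ _ hdN) _)
    have hξ' : B.repr ξ' = Finsupp.single 0 (b + c * t) + Finsupp.single 1 (-c) :=
      B.repr_intCast_add_mul hB _ _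
    have hdc : d ∣ c := by simpa [hξ'] using B.intCast_dvd_iff.1 hdξ' 1
    have hdb : d ∣ b := (dvd_add_left (hdc.mul_right t)).1
      (by simpa [hξ'] using B.intCast_dvd_iff.1 hdξ' 0)
    have hdξ : (d : R) ∣ b + c * B 1 := by
      refine B.intCast_dvd_iff.2 (Fin.forall_fin_two.2 ⟨?_, ?_⟩) <;>
        simpa [B.repr_intCast_add_mul hB]
    have hd1 : (d : R) ∣ 1 := huw ▸ dvd_add (dvd_mul_of_dvd_right (Int.cast_dvd_cast _ _ hda) _)
      (dvd_mul_of_dvd_right hdξ _)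
    simpa [← hB] using B.intCast_dvd_iff.1 hd1 0
  · rintro ⟨α, β, h⟩
    refine ⟨α, β * ξ', ?_⟩
    have h' : ((α * a + β * (b * b + b * c * t - c * c * s) : ℤ) : R) = 1 := by
      rw [h, Int.cast_one]
    push_cast at h' hnorm
    linear_combination h' + β * hnorm

theorem dvd_of_intCast_mul_mem_multOrd (hB : B 0 = 1) (hω : B 1 * B 1 = s + t * B 1)
    {a b c v : ℤ} (h : (v : R) * B 1 ∈ multOrd (AddSubgroup.closure {(a : R), b + c * B 1})) :
    c ∣ v * a ∧ a * c ∣ v * (b * b + b * c * t - c * c * s) := by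
  obtain ⟨h₁, h₂⟩ := mem_multOrd_closure_pair_iff.1 h
  obtain ⟨m, n, hm⟩ := AddSubgroup.mem_closure_pair.1 h₁
  obtain ⟨m', n', hm'⟩ := AddSubgroup.mem_closure_pair.1 h₂
  have hcoord : ∀ m n : ℤ,
      m • (a : R) + n • (b + c * B 1) = ((m * a + n * b : ℤ) : R) + (n * c : ℤ) * B 1 := by
    intro m n
    push_cast
    simp only [zsmul_eq_mul]
    ring
  rw [hcoord] at hm hm'
  obtain ⟨-, hn⟩ := B.intCast_add_mul_inj hB
    (hm.trans (by push_cast; ring : _ = ((0 : ℤ) : R) + (v * a : ℤ) * B 1))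
  obtain ⟨hm'₀, hn'₁⟩ := B.intCast_add_mul_inj hB
    (hm'.trans (by push_cast; linear_combination (v * c : R) * hω :
      _ = ((v * c * s : ℤ) : R) + (v * (b + c * t) : ℤ) * B 1))
  exact ⟨⟨n, by linarith⟩, ⟨-m', by linear_combination c * hm'₀ - b * hn'₁⟩⟩

theorem intCast_mul_mem_multOrd_of_dvd (hω : B 1 * B 1 = s + t * B 1) {a b c d a' N' : ℤ}
    (ha : a = d * a') (hN : b * b + b * c * t - c * c * s = d * N') :
    ((a' * c : ℤ) : R) * B 1 ∈ multOrd (AddSubgroup.closure {(a : R), b + c * B 1}) := by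
  have ha := congrArg (Int.cast : ℤ → R) ha
  have hN := congrArg (Int.cast : ℤ → R) hN
  push_cast at ha hN
  refine mem_multOrd_closure_pair_iff.2 ⟨AddSubgroup.mem_closure_pair.2 ⟨-a' * b, a * a', ?_⟩,
    AddSubgroup.mem_closure_pair.2 ⟨-N', a' * (b + c * t), ?_⟩⟩
  · simp only [zsmul_eq_mul]
    push_cast
    ring
  · simp only [zsmul_eq_mul]
    push_cast
    linear_combination (-(a' * c ^ 2 : R)) * hω - N' * ha + a' * hN

theorem index_multOrd_eq_iff (hB : B 0 = 1) (hω : B 1 * B 1 = s + t * B 1) {a b c : ℤ}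
    (ha : 0 < a) (hc : 0 < c) :
    ((multOrd (AddSubgroup.closure {(a : R), b + c * B 1})).index : ℤ) = a * c ↔
      IsCoprime a (b * b + b * c * t - c * c * s) := by
  set N := b * b + b * c * t - c * c * s
  set F : ℤ := ((multOrd (AddSubgroup.closure {(a : R), b + c * B 1})).index : ℤ)
  have hmem : ∀ v : ℤ,
      (v : R) * B 1 ∈ multOrd (AddSubgroup.closure {(a : R), b + c * B 1}) ↔ F ∣ v :=
    B.intCast_mul_mem_iff_index_dvd hB (by exact_mod_cast intCast_mem_multOrd _ 1)
  have hF_dvd : F ∣ a * c :=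
    (hmem _).1 (B.intCast_mul_mem_multOrd_of_dvd hω (one_mul a).symm (one_mul N).symm)
  constructor
  · intro hF
    refine isRelPrime_iff_isCoprime.1 fun d ⟨a', ha'⟩ ⟨N', hN'⟩ => isUnit_of_dvd_one ?_
    have h := (hmem _).1 (B.intCast_mul_mem_multOrd_of_dvd hω ha' hN')
    rw [hF, ha', mul_assoc] at h
    have ha'c : a' * c ≠ 0 := mul_ne_zero (by rintro rfl; omega) hc.ne'
    exact (mul_dvd_mul_iff_right ha'c).1 (by rwa [one_mul])
  · intro hcop
    obtain ⟨hca, hacN⟩ := B.dvd_of_intCast_mul_mem_multOrd hB hω ((hmem F).2 dvd_rfl)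
    obtain ⟨x, y, hxy⟩ := hcop.mul_left hcop
    have hac_dvd : a * c ∣ F := by
      rw [show F = x * a * (F * a) + y * (F * N) by linear_combination (-F) * hxy]
      exact dvd_add (mul_dvd_mul (dvd_mul_left a x) hca) (dvd_mul_of_dvd_right hacN _)
    exact Int.dvd_antisymm (by positivity) (by positivity) hF_dvd hac_dvd

end QuadraticLattice

end Module.Basis

theorem stmt9_general (K : Type) [Field K] [NumberField K]
    (hdeg : Module.finrank ℚ K = 2)
    (Λ : AddSubgroup (RingOfIntegers K)) (hfin : Λ.FiniteIndex) :
    (∃ β δ : RingOfIntegers K, IsCoprime β δ ∧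
        ∀ x : RingOfIntegers K, x ∈ Λ ↔ ∃ m n : ℤ, x = m • β + n • δ)
      ↔ Λ.index = (multOrd Λ).index := by
  obtain ⟨B, hB⟩ := Module.Basis.exists_basis_zero_eq_one
    (Module.finBasisOfFinrankEq ℤ (𝓞 K) ((RingOfIntegers.rank K).trans hdeg))
  obtain ⟨a, b, c, ha, hc, hindex, rfl⟩ := B.exists_eq_closure_pair Λ
  obtain ⟨s, t, hω⟩ : ∃ s t : ℤ, B 1 * B 1 = s + t * B 1 := ⟨_, _, B.eq_intCast_add_mul hB _⟩
  have hΛ : AddSubgroup.closure {a • B 0, b • B 0 + c • B 1} =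
      AddSubgroup.closure {(a : 𝓞 K), b + c * B 1} := by
    simp only [hB, zsmul_eq_mul, mul_one]
  rw [hΛ] at hindex ⊢
  rw [exists_isCoprime_closure_pair_iff, B.isCoprime_intCast_iff hB hω,
    ← B.index_multOrd_eq_iff hB hω ha hc, ← hindex, Nat.cast_inj, eq_comm]

/-- For a finite-index additive subgroup `Λ ⊆ O_K` of the ring of
integers of an imaginary quadratic field `K`, the following are equivalent:
(i) `Λ` admits a `ℤ`-basis of coprime elements (`Λ` is primeval);
(ii) the index `[O_K : Λ]` equals the conductor `[O_K : Ord(Λ)]` of its multiplier order. -/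
theorem stmt9 (K : Type) [Field K] [NumberField K]
    (hdeg : Module.finrank ℚ K = 2) (hdisc : NumberField.discr K < 0)
    (Λ : AddSubgroup (RingOfIntegers K)) (hfin : Λ.FiniteIndex) :
    (∃ β δ : RingOfIntegers K, IsCoprime β δ ∧
        ∀ x : RingOfIntegers K, x ∈ Λ ↔ ∃ m n : ℤ, x = m • β + n • δ)
      ↔ Λ.index = (multOrd Λ).index :=
  stmt9_general K hdeg Λ hfin
end
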